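/- arXiv:1201.1265 — 12 statements merged into one kernel-verified Lean document; each statement's English description precedes it below -/
import Mathlib

section
/- Let A, B : X → Y be bounded linear operators between Hilbert spaces with closed image, where A is injective. If ‖A†‖·‖A−B‖ < 1, where A† = (A*A)^{-1}A* is the Moore–Penrose inverse, then B is injective and ‖B†‖ ≤ ‖A†‖ / (1 − ‖A†‖·‖A−B‖). -/
/-!
Write `α = ‖A†‖` and `β = ‖A - B‖`. Since `A†A = 1`, `‖x‖ ≤ α ‖Ax‖ ≤ α (β ‖x‖ + ‖Bx‖)`, so
`B` is bounded below by `(1 - αβ) / α`; in particular it is injective and `B*B` is invertible.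
Since `B B†` is a contraction, the lower bound for `B` turns `‖B B† y‖ ≤ ‖y‖`
into `‖B† y‖ ≤ α / (1 - αβ) ‖y‖`.
-/

/-- Moore–Penrose inverse of an injective closed-range operator: A† = (A*A)⁻¹ A*. -/
noncomputable def pinv {X Y : Type*} [NormedAddCommGroup X] [InnerProductSpace ℝ X]
    [CompleteSpace X] [NormedAddCommGroup Y] [InnerProductSpace ℝ Y] [CompleteSpace Y]
    (A : X →L[ℝ] Y) : Y →L[ℝ] X :=
  (Ring.inverse ((ContinuousLinearMap.adjoint A).comp A)).comp (ContinuousLinearMap.adjoint A)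

open ContinuousLinearMap

theorem ContinuousLinearMap.antilipschitz_toNNReal_of_bound {E F : Type*}
    [SeminormedAddCommGroup E] [NormedSpace ℝ E] [SeminormedAddCommGroup F] [NormedSpace ℝ F]
    (f : E →L[ℝ] F) {M : ℝ} (h : ∀ x, ‖x‖ ≤ M * ‖f x‖) : AntilipschitzWith M.toNNReal f :=
  f.antilipschitz_of_bound fun x => by
    rw [Real.coe_toNNReal']
    exact (h x).trans (mul_le_mul_of_nonneg_right (le_max_left M 0) (norm_nonneg _))

theorem ContinuousLinearMap.le_div_mul_norm_of_le_mul_norm {𝕜 E F : Type*}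
    [NontriviallyNormedField 𝕜] [SeminormedAddCommGroup E] [NormedSpace 𝕜 E]
    [SeminormedAddCommGroup F] [NormedSpace 𝕜 F] {A B : E →L[𝕜] F} {α : ℝ} (hα : 0 ≤ α)
    (hA : ∀ x, ‖x‖ ≤ α * ‖A x‖) (h : α * ‖A - B‖ < 1) (x : E) :
    ‖x‖ ≤ α / (1 - α * ‖A - B‖) * ‖B x‖ := by
  have hAx : ‖A x‖ ≤ ‖A - B‖ * ‖x‖ + ‖B x‖ :=
    calc ‖A x‖ = ‖(A - B) x + B x‖ := by simp
      _ ≤ ‖A - B‖ * ‖x‖ + ‖B x‖ := (norm_add_le _ _).trans (by gcongr; exact (A - B).le_opNorm x)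
  rw [div_mul_eq_mul_div, le_div_iff₀ (by linarith)]
  nlinarith [hA x, mul_le_mul_of_nonneg_left hAx hα]

section Adjoint

variable {𝕜 X Y : Type*} [RCLike 𝕜] [NormedAddCommGroup X] [InnerProductSpace 𝕜 X]
  [CompleteSpace X] [NormedAddCommGroup Y] [InnerProductSpace 𝕜 Y] [CompleteSpace Y]

theorem ContinuousLinearMap.isUnit_adjoint_comp_self_of_antilipschitz {B : X →L[𝕜] Y} {K : NNReal}
    (hB : AntilipschitzWith K B) : IsUnit (adjoint B ∘L B) := by
  refine isUnit_of_forall_le_norm_inner_map _ (c := ((K + 1) ^ 2)⁻¹) (by positivity) fun x => ?_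
  have hx : ‖x‖ ≤ (K + 1) * ‖B x‖ :=
    (B.bound_of_antilipschitz hB x).trans (by gcongr; simp)
  calc ‖x‖ ^ 2 * (((K + 1) ^ 2)⁻¹ : NNReal) ≤ ‖B x‖ ^ 2 := by
        push_cast
        rw [← div_eq_mul_inv, div_le_iff₀ (by positivity)]
        nlinarith [norm_nonneg x]
    _ = RCLike.re (inner 𝕜 ((adjoint B ∘L B) x) x) := B.apply_norm_sq_eq_inner_adjoint_left x
    _ ≤ ‖inner 𝕜 ((adjoint B ∘L B) x) x‖ := RCLike.re_le_norm _

end Adjoint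

section Pinv

variable {X Y : Type*} [NormedAddCommGroup X] [InnerProductSpace ℝ X] [CompleteSpace X]
  [NormedAddCommGroup Y] [InnerProductSpace ℝ Y] [CompleteSpace Y] {B : X →L[ℝ] Y}

theorem pinv_apply_apply (hB : IsUnit (adjoint B ∘L B)) (x : X) : pinv B (B x) = x :=
  congrArg (· x) (Ring.inverse_mul_cancel _ hB)

theorem adjoint_apply_pinv_apply (hB : IsUnit (adjoint B ∘L B)) (y : Y) :
    adjoint B (B (pinv B y)) = adjoint B y :=
  congrArg (· (adjoint B y)) (Ring.mul_inverse_cancel _ hB)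

/-- `B B†` is the orthogonal projection onto the range of `B`, hence a contraction. -/
theorem norm_apply_pinv_apply_le (hB : IsUnit (adjoint B ∘L B)) (y : Y) :
    ‖B (pinv B y)‖ ≤ ‖y‖ := by
  set x := pinv B y
  have hsq : ‖B x‖ ^ 2 = inner ℝ y (B x) := by
    rw [← real_inner_self_eq_norm_sq, ← adjoint_inner_left, adjoint_apply_pinv_apply hB,
      adjoint_inner_left]
  nlinarith [real_inner_le_norm y (B x), norm_nonneg (B x), norm_nonneg y]

theorem norm_le_norm_pinv_mul (hB : IsUnit (adjoint B ∘L B)) (x : X) :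
    ‖x‖ ≤ ‖pinv B‖ * ‖B x‖ :=
  calc ‖x‖ = ‖pinv B (B x)‖ := by rw [pinv_apply_apply hB]
    _ ≤ ‖pinv B‖ * ‖B x‖ := (pinv B).le_opNorm _

theorem norm_pinv_le_of_bound {M : ℝ} (hM : 0 ≤ M) (h : ∀ x, ‖x‖ ≤ M * ‖B x‖) :
    ‖pinv B‖ ≤ M := by
  have hB := isUnit_adjoint_comp_self_of_antilipschitz (B.antilipschitz_toNNReal_of_bound h)
  refine opNorm_le_bound _ hM fun y => ?_
  calc ‖pinv B y‖ ≤ M * ‖B (pinv B y)‖ := h _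
    _ ≤ M * ‖y‖ := by gcongr; exact norm_apply_pinv_apply_le hB y

end Pinv

theorem stmt0_general {X Y : Type*} [NormedAddCommGroup X] [InnerProductSpace ℝ X] [CompleteSpace X]
    [NormedAddCommGroup Y] [InnerProductSpace ℝ Y] [CompleteSpace Y]
    (A B : X →L[ℝ] Y)
    (hAclosed : IsClosed (Set.range (A : X → Y)))
    (hAinj : Function.Injective (A : X → Y))
    (h : ‖pinv A‖ * ‖A - B‖ < 1) :
    Function.Injective (B : X → Y) ∧
      ‖pinv B‖ ≤ ‖pinv A‖ / (1 - ‖pinv A‖ * ‖A - B‖) := by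
  obtain ⟨K, hK⟩ := A.antilipschitz_of_injective_of_isClosed_range hAinj hAclosed
  have hA := norm_le_norm_pinv_mul (isUnit_adjoint_comp_self_of_antilipschitz hK)
  have hB := le_div_mul_norm_of_le_mul_norm (norm_nonneg _) hA h
  have hM : 0 ≤ ‖pinv A‖ / (1 - ‖pinv A‖ * ‖A - B‖) := div_nonneg (norm_nonneg _) (by linarith)
  exact ⟨(B.antilipschitz_toNNReal_of_bound hB).injective, norm_pinv_le_of_bound hM hB⟩

theorem stmt0 {X Y : Type*} [NormedAddCommGroup X] [InnerProductSpace ℝ X] [CompleteSpace X]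
    [NormedAddCommGroup Y] [InnerProductSpace ℝ Y] [CompleteSpace Y]
    (A B : X →L[ℝ] Y)
    (hAclosed : IsClosed (Set.range (A : X → Y)))
    (hBclosed : IsClosed (Set.range (B : X → Y)))
    (hAinj : Function.Injective (A : X → Y))
    (h : ‖pinv A‖ * ‖A - B‖ < 1) :
    Function.Injective (B : X → Y) ∧
      ‖pinv B‖ ≤ ‖pinv A‖ / (1 - ‖pinv A‖ * ‖A - B‖) :=
  stmt0_general A B hAclosed hAinj h
end

section
/- Let f : [0,R) → ℝ be continuously differentiable with f(0) = 0, f'(0) = −1, and f' strictly increasing. Then for every t in (0, ν), where ν := sup{t ∈ [0,R) : f'(t) < 0}, one has t − f(t)/f'(t) < 0. -/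
/-!
Below `ν` the derivative is negative, and by the mean value theorem `f t = f' c * t` for some
`c ∈ (0, t)`; since `f'` is strictly increasing, `f t < f' t * t`, and dividing by `f' t < 0`
gives `t < f t / f' t`.
-/

open Set

/-- `sSup` of an empty or unbounded set of reals is `0`, so `0 ≤ t` rules out those cases. -/
lemma Real.exists_lt_of_nonneg_of_lt_sSup {s : Set ℝ} {t : ℝ} (ht : 0 ≤ t) (h : t < sSup s) :
    ∃ x ∈ s, t < x := by
  by_contra! hs
  exact h.not_ge (Real.sSup_le hs ht)

lemma sub_lt_mul_sub_of_strictMonoOn_deriv {f f' : ℝ → ℝ} {a b t : ℝ}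
    (hderiv : ∀ x ∈ Ico a b, HasDerivWithinAt f (f' x) (Ico a b) x)
    (hmono : StrictMonoOn f' (Ico a b)) (hat : a < t) (htb : t < b) :
    f t - f a < f' t * (t - a) := by
  have hIcc : Icc a t ⊆ Ico a b := Icc_subset_Ico_right htb
  have hcont : ContinuousOn f (Icc a t) := fun x hx =>
    (hderiv x (hIcc hx)).continuousWithinAt.mono hIcc
  have hdiff : ∀ x ∈ Ioo a t, HasDerivAt f (f' x) x := fun x hx =>
    (hderiv x (hIcc (Ioo_subset_Icc_self hx))).hasDerivAt
      (Filter.mem_of_superset (Ioo_mem_nhds hx.1 (hx.2.trans htb)) Ioo_subset_Ico_self)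
  obtain ⟨c, hc, hslope⟩ := exists_hasDerivAt_eq_slope f f' hat hcont hdiff
  have hc' : f' c < f' t :=
    hmono (hIcc (Ioo_subset_Icc_self hc)) (hIcc (right_mem_Icc.2 hat.le)) hc.2
  have hta : 0 < t - a := sub_pos.2 hat
  calc f t - f a = f' c * (t - a) := by rw [hslope]; field_simp
    _ < f' t * (t - a) := mul_lt_mul_of_pos_right hc' hta

theorem stmt1_general (R : ℝ) (f f' : ℝ → ℝ)
    (hderiv : ∀ t ∈ Set.Ico (0:ℝ) R, HasDerivWithinAt f (f' t) (Set.Ico 0 R) t)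
    (hf0 : f 0 = 0)
    (hmono : StrictMonoOn f' (Set.Ico 0 R))
    (ν : ℝ) (hν : ν = sSup {t ∈ Set.Ico 0 R | f' t < 0}) :
    ∀ t ∈ Set.Ioo 0 ν, t - f t / f' t < 0 := by
  rintro t ⟨ht0, htν⟩
  obtain ⟨s, ⟨hs, hs'⟩, hts⟩ := Real.exists_lt_of_nonneg_of_lt_sSup ht0.le (hν ▸ htν)
  have ht : t ∈ Ico 0 R := ⟨ht0.le, hts.trans hs.2⟩
  have hf't : f' t < 0 := (hmono ht hs hts).trans hs'
  have htangent : f t < f' t * t := by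
    simpa [hf0] using sub_lt_mul_sub_of_strictMonoOn_deriv hderiv hmono ht0 ht.2
  exact sub_neg.2 <| (lt_div_iff_of_neg hf't).2 (by linarith)

theorem stmt1 (R : ℝ) (hR : 0 < R) (f f' : ℝ → ℝ)
    (hderiv : ∀ t ∈ Set.Ico (0:ℝ) R, HasDerivWithinAt f (f' t) (Set.Ico 0 R) t)
    (hcont : ContinuousOn f' (Set.Ico 0 R))
    (hf0 : f 0 = 0) (hf'0 : f' 0 = -1)
    (hmono : StrictMonoOn f' (Set.Ico 0 R))
    (ν : ℝ) (hν : ν = sSup {t ∈ Set.Ico 0 R | f' t < 0}) :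
    ∀ t ∈ Set.Ioo 0 ν, t - f t / f' t < 0 :=
  stmt1_general R f f' hderiv hf0 hmono ν hν
end

section
/- Under hypotheses h1 and h2 on the majorant function f, the constant ρ := sup{δ ∈ (0,ν) : (f(t)/f'(t) − t)/t < 1 for all t ∈ (0,δ)} is strictly positive, and |n_f(t)| < t for all t ∈ (0, ρ), where n_f(t) := t − f(t)/f'(t). -/
open Set

theorem stmt3 (R : ℝ) (hR : 0 < R) (f f' : ℝ → ℝ)
    (hderiv : ∀ t ∈ Set.Ico (0:ℝ) R, HasDerivWithinAt f (f' t) (Set.Ico 0 R) t)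
    (hcont : ContinuousOn f' (Set.Ico 0 R))
    (hf0 : f 0 = 0) (hf'0 : f' 0 = -1)
    (hmono : StrictMonoOn f' (Set.Ico 0 R))
    (ν ρ : ℝ) (hν : ν = sSup {t ∈ Set.Ico 0 R | f' t < 0})
    (hρ : ρ = sSup {δ : ℝ | δ ∈ Set.Ioo 0 ν ∧ ∀ t ∈ Set.Ioo 0 δ, (f t / f' t - t) / t < 1}) :
    0 < ρ ∧ ∀ t ∈ Set.Ioo 0 ρ, |t - f t / f' t| < t := by
  -- MVT: f t = t * f' c for some c ∈ (0,t)
  have mvt : ∀ t, 0 < t → t < R → ∃ c, 0 < c ∧ c < t ∧ f t = t * f' c := by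
    intro t ht htR
    have hsub : Icc 0 t ⊆ Ico 0 R := fun x hx => ⟨hx.1, lt_of_le_of_lt hx.2 htR⟩
    have hcf : ContinuousOn f (Icc 0 t) := fun x hx =>
      ((hderiv x (hsub hx)).continuousWithinAt).mono hsub
    have hd : ∀ x ∈ Ioo 0 t, HasDerivAt f (f' x) x := fun x hx =>
      (hderiv x ⟨hx.1.le, hx.2.trans htR⟩).hasDerivAt
        (Ico_mem_nhds hx.1 (hx.2.trans htR))
    obtain ⟨c, hc, hc'⟩ := exists_hasDerivAt_eq_slope f f' ht hcf hd
    refine ⟨c, hc.1, hc.2, ?_⟩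
    rw [hf0, sub_zero, sub_zero] at hc'
    field_simp at hc'
    linarith
  -- the ν-defining set
  have hSν : ({t ∈ Set.Ico (0:ℝ) R | f' t < 0}).Nonempty :=
    ⟨0, ⟨le_rfl, hR⟩, by rw [hf'0]; norm_num⟩
  have hSνbdd : BddAbove {t ∈ Set.Ico (0:ℝ) R | f' t < 0} :=
    ⟨R, fun x hx => hx.1.2.le⟩
  -- for t < ν : f' t < 0 and t < R
  have hf'neg : ∀ t, 0 ≤ t → t < ν → f' t < 0 ∧ t < R := by
    intro t ht htν
    rw [hν] at htν
    obtain ⟨s, hs, hts⟩ := exists_lt_of_lt_csSup hSν htν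
    have htR : t < R := hts.trans hs.1.2
    exact ⟨(hmono ⟨ht, htR⟩ hs.1 hts).trans hs.2, htR⟩
  -- f t / f' t > 0 for 0 < t < ν
  have hpos : ∀ t, 0 < t → t < ν → 0 < f t / f' t := by
    intro t ht htν
    obtain ⟨hf't, htR⟩ := hf'neg t ht.le htν
    obtain ⟨c, hc0, hct, hfc⟩ := mvt t ht htR
    have hcc : f' c < f' t := hmono ⟨hc0.le, hct.trans htR⟩ ⟨ht.le, htR⟩ hct
    have hfneg : f t < 0 := by
      rw [hfc]; exact mul_neg_of_pos_of_neg ht (hcc.trans hf't)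
    exact div_pos_of_neg_of_neg hfneg hf't
  -- continuity of f' at 0 gives ε
  have hcw : ContinuousWithinAt f' (Set.Ico 0 R) 0 := hcont 0 ⟨le_rfl, hR⟩
  have hmem : f' ⁻¹' (Iio (-1/2)) ∈ nhdsWithin 0 (Set.Ico 0 R) := by
    apply hcw
    rw [hf'0]
    exact Iio_mem_nhds (by norm_num)
  rw [Metric.mem_nhdsWithin_iff] at hmem
  obtain ⟨ε, hε, hball⟩ := hmem
  set m := min ε R with hm
  have hm0 : 0 < m := lt_min hε hR
  have hsmall : ∀ t, 0 ≤ t → t < m → f' t < -1/2 := by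
    intro t ht htm
    have : t ∈ Metric.ball (0:ℝ) ε ∩ Ico 0 R := by
      constructor
      · simp [Real.dist_eq, abs_of_nonneg ht]
        exact htm.trans_le (min_le_left _ _)
      · exact ⟨ht, htm.trans_le (min_le_right _ _)⟩
    exact hball this
  -- m/2 ≤ ν
  have hmν : m / 2 ≤ ν := by
    rw [hν]
    apply le_csSup hSνbdd
    refine ⟨⟨by linarith, by linarith [min_le_right ε R]⟩, ?_⟩
    have := hsmall (m/2) (by linarith) (by linarith)
    linarith
  -- the key bound for small t
  have hkey : ∀ t, 0 < t → t < m / 2 → f t / f' t < 2 * t := by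
    intro t ht htm
    have htν : t < ν := htm.trans_le hmν
    obtain ⟨hf't, htR⟩ := hf'neg t ht.le htν
    have hf't2 : f' t < -1/2 := hsmall t ht.le (by linarith)
    obtain ⟨c, hc0, hct, hfc⟩ := mvt t ht htR
    have hc1 : -1 < f' c := by
      have := hmono ⟨le_rfl, hR⟩ ⟨hc0.le, hct.trans htR⟩ hc0
      rw [hf'0] at this; exact this
    rw [div_lt_iff_of_neg hf't, hfc]
    nlinarith
  -- δ' := m/4 belongs to the ρ-set
  have hδ'mem : m / 4 ∈ {δ : ℝ | δ ∈ Set.Ioo 0 ν ∧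
      ∀ t ∈ Set.Ioo 0 δ, (f t / f' t - t) / t < 1} := by
    refine ⟨⟨by linarith, by linarith⟩, ?_⟩
    intro t ⟨ht, htδ⟩
    rw [div_lt_one ht]
    have := hkey t ht (by linarith)
    linarith
  have hSbdd : BddAbove {δ : ℝ | δ ∈ Set.Ioo 0 ν ∧
      ∀ t ∈ Set.Ioo 0 δ, (f t / f' t - t) / t < 1} :=
    ⟨ν, fun x hx => hx.1.2.le⟩
  have hρpos : 0 < ρ := by
    rw [hρ]
    calc (0:ℝ) < m / 4 := by linarith
    _ ≤ _ := le_csSup hSbdd hδ'mem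
  refine ⟨hρpos, ?_⟩
  intro t ⟨ht, htρ⟩
  rw [hρ] at htρ
  obtain ⟨δ, hδ, htδ⟩ := exists_lt_of_lt_csSup ⟨m/4, hδ'mem⟩ htρ
  have h1 : (f t / f' t - t) / t < 1 := hδ.2 t ⟨ht, htδ⟩
  rw [div_lt_one ht] at h1
  have h2 : 0 < f t / f' t := hpos t ht (htδ.trans hδ.1.2)
  rw [abs_lt]
  constructor <;> linarith
end

section
/- Under hypotheses h1 and h2 on f, the sequence defined by t_0 ∈ (0, ρ) and t_{k+1} = |n_f(t_k)| is well defined, strictly decreasing, contained in (0, ρ), and converges to 0. -/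
/-!
For `0 < x < ρ` we have `x < ν`, so `f' x < 0`, and strict monotonicity of `f'` with the mean value
theorem gives `f x < x f'(x)`, i.e. `n_f(x) < 0`; the defining inequality of `ρ` gives `n_f(x) > -x`.
Hence `x ↦ |n_f(x)|` maps `(0, ρ)` continuously into itself with `0 < |n_f(x)| < x`. The orbit is
then strictly decreasing and converges to some `L ≥ 0`; if `L > 0`, continuity makes `L` a fixed
point, contradicting `|n_f(L)| < L`.
-/

open Set Filter Topology

-- `sSup ∅ = 0` in `ℝ`, so the hypothesis `0 ≤ x` replaces nonemptiness of `S`.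
lemma exists_lt_of_nonneg_lt_sSup {S : Set ℝ} {x : ℝ} (hx : 0 ≤ x) (h : x < sSup S) :
    ∃ s ∈ S, x < s := by
  rcases S.eq_empty_or_nonempty with rfl | hS
  · rw [Real.sSup_empty] at h
    exact absurd hx h.not_ge
  · exact exists_lt_of_lt_csSup hS h

lemma sub_lt_mul_of_strictMonoOn_of_hasDerivAt {f f' : ℝ → ℝ} {a b : ℝ} (hab : a < b)
    (hf : ContinuousOn f (Icc a b)) (hd : ∀ y ∈ Ioo a b, HasDerivAt f (f' y) y)
    (hmono : StrictMonoOn f' (Ioc a b)) : f b - f a < (b - a) * f' b := by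
  obtain ⟨c, hc, hslope⟩ := exists_hasDerivAt_eq_slope f f' hab hf hd
  have hcb : f' c < f' b := hmono (Ioo_subset_Ioc_self hc) (right_mem_Ioc.2 hab) hc.2
  rw [eq_div_iff (sub_pos.2 hab).ne'] at hslope
  nlinarith [sub_pos.2 hab]

lemma abs_sub_div_mem_Ioo {x a b : ℝ} (hx : 0 < x) (hb : b < 0) (hab : a < x * b)
    (hlt : (a / b - x) / x < 1) : |x - a / b| ∈ Ioo 0 x := by
  have hxab : x < a / b := (lt_div_iff_of_neg hb).2 (by linarith)
  have hab2 : a / b < 2 * x := by linarith [(div_lt_one hx).1 hlt]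
  rw [abs_of_neg (by linarith)]
  constructor <;> linarith

theorem tendsto_zero_of_mem_Ioo_self {g : ℝ → ℝ} {ρ : ℝ} (hg : ContinuousOn g (Ioo 0 ρ))
    (hlt : ∀ x ∈ Ioo 0 ρ, g x ∈ Ioo 0 x) {t : ℕ → ℝ} (ht0 : t 0 ∈ Ioo 0 ρ)
    (hrec : ∀ k, t (k + 1) = g (t k)) :
    StrictAnti t ∧ (∀ k, t k ∈ Ioo 0 ρ) ∧ Tendsto t atTop (𝓝 0) := by
  have hmem : ∀ k, t k ∈ Ioo 0 ρ := by
    intro k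
    induction k with
    | zero => exact ht0
    | succ k ih =>
      have hstep := hlt (t k) ih
      rw [hrec k]
      exact ⟨hstep.1, hstep.2.trans ih.2⟩
  have hanti : StrictAnti t := strictAnti_nat_of_succ_lt fun k => by
    rw [hrec k]
    exact (hlt (t k) (hmem k)).2
  refine ⟨hanti, hmem, ?_⟩
  have hbdd : BddBelow (range t) := ⟨0, by rintro _ ⟨k, rfl⟩; exact (hmem k).1.le⟩
  have hlim : Tendsto t atTop (𝓝 (⨅ k, t k)) := tendsto_atTop_ciInf hanti.antitone hbdd
  set L := ⨅ k, t k
  have hL0 : 0 ≤ L := le_ciInf fun k => (hmem k).1.le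
  rcases hL0.eq_or_lt with hL | hL
  · rwa [← hL] at hlim
  have hLρ : L < ρ := (ciInf_le hbdd 0).trans_lt (hmem 0).2
  have horbit : t = fun k => g^[k] (t 0) := by
    funext k
    induction k with
    | zero => rfl
    | succ k ih => rw [hrec k, ih, Function.iterate_succ_apply']
  have hfix : g L = L := isFixedPt_of_tendsto_iterate (horbit ▸ hlim)
    (hg.continuousAt (Ioo_mem_nhds hL hLρ))
  exact absurd hfix (hlt L ⟨hL, hLρ⟩).2.ne

section Newton

variable {R : ℝ} {f f' : ℝ → ℝ}

lemma lt_and_deriv_neg_of_lt_sSup (hmono : StrictMonoOn f' (Ico 0 R)) {x : ℝ} (hx : 0 ≤ x)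
    (hxν : x < sSup {t ∈ Ico 0 R | f' t < 0}) : x < R ∧ f' x < 0 := by
  obtain ⟨s, ⟨hs, hs'⟩, hxs⟩ := exists_lt_of_nonneg_lt_sSup hx hxν
  have hxR : x < R := hxs.trans hs.2
  exact ⟨hxR, (hmono ⟨hx, hxR⟩ hs hxs).trans hs'⟩

lemma lt_mul_deriv_of_strictMonoOn
    (hderiv : ∀ t ∈ Ico (0:ℝ) R, HasDerivWithinAt f (f' t) (Ico 0 R) t)
    (hf0 : f 0 = 0) (hmono : StrictMonoOn f' (Ico 0 R)) {x : ℝ} (hx : 0 < x) (hxR : x < R) :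
    f x < x * f' x := by
  have hsub : Icc 0 x ⊆ Ico 0 R := Icc_subset_Ico_right hxR
  have hcont : ContinuousOn f (Icc 0 x) := fun y hy =>
    (hderiv y (hsub hy)).continuousWithinAt.mono hsub
  have hd : ∀ y ∈ Ioo 0 x, HasDerivAt f (f' y) y := fun y hy =>
    (hderiv y ⟨hy.1.le, hy.2.trans hxR⟩).hasDerivAt (Ico_mem_nhds hy.1 (hy.2.trans hxR))
  simpa [hf0] using sub_lt_mul_of_strictMonoOn_of_hasDerivAt hx hcont hd
    (hmono.mono fun y hy => ⟨hy.1.le, hy.2.trans_lt hxR⟩)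

end Newton

theorem stmt4_general (R : ℝ) (f f' : ℝ → ℝ)
    (hderiv : ∀ t ∈ Set.Ico (0:ℝ) R, HasDerivWithinAt f (f' t) (Set.Ico 0 R) t)
    (hcont : ContinuousOn f' (Set.Ico 0 R))
    (hf0 : f 0 = 0)
    (hmono : StrictMonoOn f' (Set.Ico 0 R))
    (ν ρ : ℝ) (hν : ν = sSup {t ∈ Set.Ico 0 R | f' t < 0})
    (hρ : ρ = sSup {δ : ℝ | δ ∈ Set.Ioo 0 ν ∧ ∀ t ∈ Set.Ioo 0 δ, (f t / f' t - t) / t < 1})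
    (t : ℕ → ℝ) (ht0 : t 0 ∈ Set.Ioo 0 ρ)
    (hrec : ∀ k, t (k + 1) = |t k - f (t k) / f' (t k)|) :
    StrictAnti t ∧ (∀ k, t k ∈ Set.Ioo 0 ρ) ∧
      Filter.Tendsto t Filter.atTop (nhds 0) := by
  have hbelow : ∀ x ∈ Ioo 0 ρ, x < R ∧ f' x < 0 ∧ (f x / f' x - x) / x < 1 := by
    rintro x ⟨hx, hxρ⟩
    obtain ⟨δ, ⟨hδ, hδρ⟩, hxδ⟩ := exists_lt_of_nonneg_lt_sSup hx.le (hρ ▸ hxρ)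
    obtain ⟨hxR, hfx'⟩ := lt_and_deriv_neg_of_lt_sSup hmono hx.le (hν ▸ hxδ.trans hδ.2)
    exact ⟨hxR, hfx', hδρ x ⟨hx, hxδ⟩⟩
  refine tendsto_zero_of_mem_Ioo_self (g := fun x => |x - f x / f' x|) ?_ ?_ ht0 hrec
  · intro x hx
    obtain ⟨hxR, hfx', -⟩ := hbelow x hx
    have hnhds : Ico 0 R ∈ 𝓝 x := Ico_mem_nhds hx.1 hxR
    have hfx := ((hderiv x (mem_of_mem_nhds hnhds)).hasDerivAt hnhds).continuousAt
    exact ((continuousAt_id.sub (hfx.div ((hcont x (mem_of_mem_nhds hnhds)).continuousAt hnhds)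
      hfx'.ne)).abs).continuousWithinAt
  · intro x hx
    obtain ⟨hxR, hfx', hlt⟩ := hbelow x hx
    exact abs_sub_div_mem_Ioo hx.1 hfx' (lt_mul_deriv_of_strictMonoOn hderiv hf0 hmono hx.1 hxR) hlt

theorem stmt4 (R : ℝ) (hR : 0 < R) (f f' : ℝ → ℝ)
    (hderiv : ∀ t ∈ Set.Ico (0:ℝ) R, HasDerivWithinAt f (f' t) (Set.Ico 0 R) t)
    (hcont : ContinuousOn f' (Set.Ico 0 R))
    (hf0 : f 0 = 0) (hf'0 : f' 0 = -1)
    (hmono : StrictMonoOn f' (Set.Ico 0 R))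
    (ν ρ : ℝ) (hν : ν = sSup {t ∈ Set.Ico 0 R | f' t < 0})
    (hρ : ρ = sSup {δ : ℝ | δ ∈ Set.Ioo 0 ν ∧ ∀ t ∈ Set.Ioo 0 δ, (f t / f' t - t) / t < 1})
    (t : ℕ → ℝ) (ht0 : t 0 ∈ Set.Ioo 0 ρ)
    (hrec : ∀ k, t (k + 1) = |t k - f (t k) / f' (t k)|) :
    StrictAnti t ∧ (∀ k, t k ∈ Set.Ioo 0 ρ) ∧
      Filter.Tendsto t Filter.atTop (nhds 0) :=
  stmt4_general R f f' hderiv hcont hf0 hmono ν ρ hν hρ t ht0 hrec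
end

section
/- Under hypotheses h1 and h2 on f, the scalar sequence t_0 ∈ (0,ρ), t_{k+1} = |n_f(t_k)| converges to 0 superlinearly: lim_{k→∞} t_{k+1}/t_k = 0. -/
/-!
Since `f'` is strictly increasing, the mean value theorem gives `f(x) < x f'(x)` for `x > 0`; so for
`x ∈ (0, ρ)`, where `f'(x) < 0`, the Newton point `n_f(x)` is negative and
`|n_f(x)| = f(x)/f'(x) - x > 0`, while the definition of `ρ` makes it smaller than `x`. The iterates
therefore decrease in `(0, ρ)`; their limit is a fixed point of the continuous map
`x ↦ f(x)/f'(x) - x`, which has none in `(0, ρ)`, so `t_k → 0`. Finally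
`t_{k+1} / t_k = (f(t_k) / t_k) / f'(t_k) - 1 → f'(0) / f'(0) - 1 = 0`.
-/

open Set Filter Topology

-- `0 ≤ x` excludes `S = ∅`, whose junk `sSup` is `0`.
lemma exists_mem_gt_of_nonneg_of_lt_sSup {S : Set ℝ} {x : ℝ} (hx0 : 0 ≤ x) (hx : x < sSup S) :
    ∃ s ∈ S, x < s := by
  refine exists_lt_of_lt_csSup ?_ hx
  by_contra hS
  rw [not_nonempty_iff_eq_empty.mp hS, Real.sSup_empty] at hx
  linarith

lemma lt_and_of_lt_sSup_radii {ν x : ℝ} {p : ℝ → Prop} (hx0 : 0 < x)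
    (hx : x < sSup {δ | δ ∈ Ioo 0 ν ∧ ∀ t ∈ Ioo 0 δ, p t}) : x < ν ∧ p x := by
  obtain ⟨δ, ⟨hδ, hp⟩, hxδ⟩ := exists_mem_gt_of_nonneg_of_lt_sSup hx0.le hx
  exact ⟨hxδ.trans hδ.2, hp x ⟨hx0, hxδ⟩⟩

lemma lt_and_neg_of_lt_sSup_neg {R x : ℝ} {g : ℝ → ℝ} (hg : MonotoneOn g (Ico 0 R))
    (hx0 : 0 ≤ x) (hx : x < sSup {t ∈ Ico 0 R | g t < 0}) : x < R ∧ g x < 0 := by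
  obtain ⟨s, ⟨hs, hgs⟩, hxs⟩ := exists_mem_gt_of_nonneg_of_lt_sSup hx0 hx
  have hxR : x < R := hxs.trans hs.2
  exact ⟨hxR, (hg ⟨hx0, hxR⟩ hs hxs.le).trans_lt hgs⟩

lemma sub_lt_deriv_mul_sub {a b x : ℝ} {f f' : ℝ → ℝ}
    (hderiv : ∀ t ∈ Ico a b, HasDerivWithinAt f (f' t) (Ico a b) t)
    (hmono : StrictMonoOn f' (Ico a b)) (hax : a < x) (hxb : x < b) :
    f x - f a < f' x * (x - a) := by
  have hsub : Icc a x ⊆ Ico a b := Icc_subset_Ico_right hxb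
  obtain ⟨c, hc, hslope⟩ := exists_hasDerivAt_eq_slope f f' hax
    (fun y hy => (hderiv y (hsub hy)).continuousWithinAt.mono hsub)
    (fun y hy => (hderiv y (hsub (Ioo_subset_Icc_self hy))).hasDerivAt
      (Ico_mem_nhds hy.1 (hy.2.trans hxb)))
  have hlt : f' c < f' x := hmono ⟨hc.1.le, hc.2.trans hxb⟩ ⟨hax.le, hxb⟩ hc.2
  rwa [hslope, div_lt_iff₀ (sub_pos.mpr hax)] at hlt

section NewtonMap

variable {R : ℝ} {f f' : ℝ → ℝ}

lemma lt_div_deriv_of_strictMonoOn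
    (hderiv : ∀ t ∈ Ico 0 R, HasDerivWithinAt f (f' t) (Ico 0 R) t)
    (hmono : StrictMonoOn f' (Ico 0 R)) (hf0 : f 0 = 0) {x : ℝ} (hx0 : 0 < x) (hxR : x < R)
    (hf'x : f' x < 0) : x < f x / f' x := by
  have h := sub_lt_deriv_mul_sub hderiv hmono hx0 hxR
  rw [hf0, sub_zero, sub_zero] at h
  rw [lt_div_iff_of_neg hf'x]
  linarith

lemma newtonMap_mem_Ioo_of_lt_sSup
    (hderiv : ∀ t ∈ Ico 0 R, HasDerivWithinAt f (f' t) (Ico 0 R) t)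
    (hmono : StrictMonoOn f' (Ico 0 R)) (hf0 : f 0 = 0) {x : ℝ} (hx0 : 0 < x)
    (hx : x < sSup {δ | δ ∈ Ioo 0 (sSup {t ∈ Ico 0 R | f' t < 0}) ∧
      ∀ t ∈ Ioo 0 δ, (f t / f' t - t) / t < 1}) :
    x < R ∧ f' x < 0 ∧ f x / f' x - x ∈ Ioo 0 x := by
  obtain ⟨hxν, hcontract⟩ := lt_and_of_lt_sSup_radii hx0 hx
  obtain ⟨hxR, hf'x⟩ := lt_and_neg_of_lt_sSup_neg hmono.monotoneOn hx0.le hxν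
  exact ⟨hxR, hf'x, sub_pos.2 (lt_div_deriv_of_strictMonoOn hderiv hmono hf0 hx0 hxR hf'x),
    (div_lt_one hx0).mp hcontract⟩

lemma continuousAt_newtonMap
    (hderiv : ∀ t ∈ Ico 0 R, HasDerivWithinAt f (f' t) (Ico 0 R) t)
    (hcont : ContinuousOn f' (Ico 0 R)) {x : ℝ} (hx0 : 0 < x) (hxR : x < R) (hf'x : f' x ≠ 0) :
    ContinuousAt (fun y => f y / f' y - y) x := by
  have hnhds : Ico 0 R ∈ 𝓝 x := Ico_mem_nhds hx0 hxR
  have hf : ContinuousAt f x := ((hderiv x ⟨hx0.le, hxR⟩).hasDerivAt hnhds).continuousAt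
  exact (hf.div ((hcont x ⟨hx0.le, hxR⟩).continuousAt hnhds) hf'x).sub continuousAt_id

end NewtonMap

lemma tendsto_zero_of_antitone_of_ne_fixedPt {u : ℕ → ℝ} {g : ℝ → ℝ} (hanti : Antitone u)
    (hpos : ∀ k, 0 ≤ u k) (hrec : ∀ k, u (k + 1) = g (u k))
    (hg : ∀ x ∈ Ioc 0 (u 0), ContinuousAt g x ∧ g x ≠ x) : Tendsto u atTop (𝓝 0) := by
  have hbdd : BddBelow (range u) := ⟨0, forall_mem_range.2 hpos⟩
  have hL := tendsto_atTop_ciInf hanti hbdd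
  suffices ⨅ k, u k = 0 by rwa [this] at hL
  by_contra hL0
  obtain ⟨hcont, hfix⟩ := hg _ ⟨(le_ciInf hpos).lt_of_ne' hL0, ciInf_le hbdd 0⟩
  have hshift : Tendsto (fun k => u (k + 1)) atTop (𝓝 (g (⨅ k, u k))) := by
    simpa only [hrec, Function.comp_def] using hcont.tendsto.comp hL
  exact hfix (tendsto_nhds_unique hshift (hL.comp (tendsto_add_atTop_nat 1)))

theorem tendsto_newton_ratio {α : Type*} {l : Filter α} {u : α → ℝ} {f f' : ℝ → ℝ} {s : Set ℝ}
    (hf0 : f 0 = 0) (hd : HasDerivWithinAt f (f' 0) s 0) (hc : ContinuousWithinAt f' s 0)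
    (hf'0 : f' 0 ≠ 0) (hu : Tendsto u l (𝓝[s \ {0}] 0)) :
    Tendsto (fun a => (f (u a) / f' (u a) - u a) / u a) l (𝓝 0) := by
  have hslope : Tendsto (fun a => f (u a) / u a) l (𝓝 (f' 0)) := by
    simpa [Function.comp_def, slope_def_field, hf0] using
      (hasDerivWithinAt_iff_tendsto_slope.mp hd).comp hu
  have hderiv : Tendsto (fun a => f' (u a)) l (𝓝 (f' 0)) :=
    hc.tendsto.comp (hu.mono_right (nhdsWithin_mono _ sdiff_subset))
  have hlim : Tendsto (fun a => f (u a) / u a / f' (u a) - 1) l (𝓝 0) := by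
    simpa [div_self hf'0] using (hslope.div hderiv hf'0).sub_const 1
  refine hlim.congr' ?_
  filter_upwards [hu.eventually eventually_mem_nhdsWithin] with a ha
  have hu0 : u a ≠ 0 := ha.2
  field_simp

theorem stmt5 (R : ℝ) (hR : 0 < R) (f f' : ℝ → ℝ)
    (hderiv : ∀ t ∈ Set.Ico (0:ℝ) R, HasDerivWithinAt f (f' t) (Set.Ico 0 R) t)
    (hcont : ContinuousOn f' (Set.Ico 0 R))
    (hf0 : f 0 = 0) (hf'0 : f' 0 = -1)
    (hmono : StrictMonoOn f' (Set.Ico 0 R))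
    (ν ρ : ℝ) (hν : ν = sSup {t ∈ Set.Ico 0 R | f' t < 0})
    (hρ : ρ = sSup {δ : ℝ | δ ∈ Set.Ioo 0 ν ∧ ∀ t ∈ Set.Ioo 0 δ, (f t / f' t - t) / t < 1})
    (t : ℕ → ℝ) (ht0 : t 0 ∈ Set.Ioo 0 ρ)
    (hrec : ∀ k, t (k + 1) = |t k - f (t k) / f' (t k)|) :
    Filter.Tendsto (fun k => t (k + 1) / t k) Filter.atTop (nhds 0) := by
  have hinside : ∀ x ∈ Ioo 0 ρ, x < R ∧ f' x < 0 ∧ f x / f' x - x ∈ Ioo 0 x := by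
    subst hν hρ
    exact fun x hx => newtonMap_mem_Ioo_of_lt_sSup hderiv hmono hf0 hx.1 hx.2
  have hstep : ∀ x ∈ Ioo 0 ρ, |x - f x / f' x| = f x / f' x - x := fun x hx => by
    rw [abs_sub_comm, abs_of_pos (hinside x hx).2.2.1]
  have hmem : ∀ k, t k ∈ Ioo 0 ρ := by
    intro k
    induction k with
    | zero => exact ht0
    | succ k ih =>
      rw [hrec k, hstep _ ih]
      exact ⟨(hinside _ ih).2.2.1, (hinside _ ih).2.2.2.trans ih.2⟩
  set g : ℝ → ℝ := fun x => f x / f' x - x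
  have hrec' : ∀ k, t (k + 1) = g (t k) := fun k => (hrec k).trans (hstep _ (hmem k))
  have hanti : Antitone t :=
    antitone_nat_of_succ_le fun k => (hrec' k).le.trans (hinside _ (hmem k)).2.2.2.le
  have hlim : Tendsto t atTop (𝓝 0) := by
    refine tendsto_zero_of_antitone_of_ne_fixedPt hanti (fun k => (hmem k).1.le) hrec' ?_
    intro x hx
    obtain ⟨hxR, hf'x, -, hgx⟩ := hinside x ⟨hx.1, hx.2.trans_lt ht0.2⟩
    exact ⟨continuousAt_newtonMap hderiv hcont hx.1 hxR hf'x.ne, hgx.ne⟩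
  have hlim' : Tendsto t atTop (𝓝[Ico 0 R \ {0}] 0) :=
    tendsto_nhdsWithin_iff.2 ⟨hlim, Eventually.of_forall fun k =>
      ⟨⟨(hmem k).1.le, (hinside _ (hmem k)).1⟩, (hmem k).1.ne'⟩⟩
  have h0 : (0 : ℝ) ∈ Ico 0 R := ⟨le_rfl, hR⟩
  refine (tendsto_newton_ratio hf0 (hderiv 0 h0) (hcont 0 h0) (by rw [hf'0]; norm_num)
    hlim').congr fun k => ?_
  rw [hrec']
end

section
/- Let f satisfy h1, h2 and, for given 0 ≤ p ≤ 1, assume h3: t ↦ (f(t)/f'(t) − t)/t^{p+1} is strictly increasing on (0,ν). Then the sequence t_0 ∈ (0,ρ), t_{k+1} = |n_f(t_k)| has the property that {t_{k+1}/t_k^{p+1}} is strictly decreasing. -/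
/-!
Since `f'` is strictly increasing and `f 0 = 0`, the mean value theorem gives `f t < t f'(t)`,
so `f t / f' t > t` wherever `f' t < 0`, i.e. on `(0, ν)`. Hence the Newton step overshoots:
`|n_f(t)| = f t / f' t - t`, which is positive, and below `t` on `(0, ρ)`. The iterates therefore
stay in `(0, ρ)` and decrease strictly, while `t_{k+1} / t_k^{p+1}` is the strictly increasing
function of `h3` evaluated at `t_k`.
-/

open Set

lemma Real.exists_mem_gt_of_pos_of_lt_sSup {s : Set ℝ} {x : ℝ} (hx : 0 < x) (h : x < sSup s) :
    ∃ y ∈ s, x < y := by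
  refine exists_lt_of_lt_csSup ?_ h
  by_contra hs
  rw [not_nonempty_iff_eq_empty.1 hs, Real.sSup_empty] at h
  exact lt_asymm hx h

lemma sub_lt_mul_of_strictMonoOn_deriv {f f' : ℝ → ℝ} {a b : ℝ} (hab : a < b)
    (hfc : ContinuousOn f (Icc a b)) (hf : ∀ x ∈ Ioo a b, HasDerivAt f (f' x) x)
    (hmono : StrictMonoOn f' (Ioc a b)) : f b - f a < (b - a) * f' b := by
  obtain ⟨c, hc, hslope⟩ := exists_hasDerivAt_eq_slope f f' hab hfc hf
  have hcb : f' c < f' b := hmono (Ioo_subset_Ioc_self hc) (right_mem_Ioc.2 hab) hc.2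
  rwa [hslope, div_lt_iff₀' (sub_pos.2 hab)] at hcb

section NewtonIteration

variable {R : ℝ} {f f' : ℝ → ℝ}

lemma lt_div_of_hasDerivWithinAt_of_strictMonoOn
    (hderiv : ∀ t ∈ Ico (0 : ℝ) R, HasDerivWithinAt f (f' t) (Ico 0 R) t)
    (hf0 : f 0 = 0) (hmono : StrictMonoOn f' (Ico 0 R)) {x : ℝ} (hx : x ∈ Ioo 0 R)
    (hf'x : f' x < 0) : x < f x / f' x := by
  have hsub : Icc 0 x ⊆ Ico 0 R := Icc_subset_Ico_right hx.2
  have hfc : ContinuousOn f (Icc 0 x) := fun s hs =>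
    (hderiv s (hsub hs)).continuousWithinAt.mono hsub
  have hf : ∀ s ∈ Ioo 0 x, HasDerivAt f (f' s) s := fun s hs =>
    (hderiv s (hsub (Ioo_subset_Icc_self hs))).hasDerivAt
      (Ico_mem_nhds hs.1 (hs.2.trans hx.2))
  have := sub_lt_mul_of_strictMonoOn_deriv hx.1 hfc hf
    (hmono.mono (Ioc_subset_Icc_self.trans hsub))
  rw [hf0, sub_zero, sub_zero] at this
  rwa [lt_div_iff_of_neg hf'x]

variable {ν ρ : ℝ}

lemma lt_and_deriv_neg_of_mem_Ioo (hmono : StrictMonoOn f' (Ico 0 R))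
    (hν : ν = sSup {t ∈ Ico 0 R | f' t < 0}) {x : ℝ} (hx : x ∈ Ioo 0 ν) :
    x < R ∧ f' x < 0 := by
  obtain ⟨s, ⟨hs, hf's⟩, hxs⟩ := Real.exists_mem_gt_of_pos_of_lt_sSup hx.1 (hν ▸ hx.2)
  have hxR : x < R := hxs.trans hs.2
  exact ⟨hxR, (hmono ⟨hx.1.le, hxR⟩ hs hxs).trans hf's⟩

lemma mem_Ioo_and_div_sub_lt_self
    (hρ : ρ = sSup {δ : ℝ | δ ∈ Ioo 0 ν ∧ ∀ t ∈ Ioo 0 δ, (f t / f' t - t) / t < 1})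
    {x : ℝ} (hx : x ∈ Ioo 0 ρ) : x ∈ Ioo 0 ν ∧ f x / f' x - x < x := by
  obtain ⟨δ, ⟨hδ, hδρ⟩, hxδ⟩ :=
    Real.exists_mem_gt_of_pos_of_lt_sSup hx.1 (hρ ▸ hx.2)
  exact ⟨⟨hx.1, hxδ.trans hδ.2⟩, (div_lt_one hx.1).1 (hδρ x ⟨hx.1, hxδ⟩)⟩

lemma abs_newton_step_eq_and_mem_Ioo
    (hderiv : ∀ t ∈ Ico (0 : ℝ) R, HasDerivWithinAt f (f' t) (Ico 0 R) t)
    (hf0 : f 0 = 0) (hmono : StrictMonoOn f' (Ico 0 R))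
    (hν : ν = sSup {t ∈ Ico 0 R | f' t < 0})
    (hρ : ρ = sSup {δ : ℝ | δ ∈ Ioo 0 ν ∧ ∀ t ∈ Ioo 0 δ, (f t / f' t - t) / t < 1})
    {x : ℝ} (hx : x ∈ Ioo 0 ρ) :
    |x - f x / f' x| = f x / f' x - x ∧ f x / f' x - x ∈ Ioo 0 x := by
  obtain ⟨hxν, hstep⟩ := mem_Ioo_and_div_sub_lt_self hρ hx
  obtain ⟨hxR, hf'x⟩ := lt_and_deriv_neg_of_mem_Ioo hmono hν hxν
  have hover :=
    lt_div_of_hasDerivWithinAt_of_strictMonoOn hderiv hf0 hmono ⟨hx.1, hxR⟩ hf'x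
  exact ⟨by rw [abs_sub_comm, abs_of_pos (sub_pos.2 hover)], sub_pos.2 hover, hstep⟩

end NewtonIteration

theorem stmt6_general (R : ℝ) (f f' : ℝ → ℝ)
    (hderiv : ∀ t ∈ Set.Ico (0:ℝ) R, HasDerivWithinAt f (f' t) (Set.Ico 0 R) t)
    (hf0 : f 0 = 0)
    (hmono : StrictMonoOn f' (Set.Ico 0 R))
    (ν ρ : ℝ) (hν : ν = sSup {t ∈ Set.Ico 0 R | f' t < 0})
    (hρ : ρ = sSup {δ : ℝ | δ ∈ Set.Ioo 0 ν ∧ ∀ t ∈ Set.Ioo 0 δ, (f t / f' t - t) / t < 1})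
    (p : ℝ)
    (h3 : StrictMonoOn (fun t => (f t / f' t - t) / t ^ (p + 1)) (Set.Ioo 0 ν))
    (t : ℕ → ℝ) (ht0 : t 0 ∈ Set.Ioo 0 ρ)
    (hrec : ∀ k, t (k + 1) = |t k - f (t k) / f' (t k)|) :
    StrictAnti (fun k => t (k + 1) / t k ^ (p + 1)) := by
  have hstep : ∀ k, t k ∈ Ioo 0 ρ →
      t (k + 1) = f (t k) / f' (t k) - t k ∧ t (k + 1) ∈ Ioo 0 (t k) := by
    intro k hk
    obtain ⟨habs, hmem⟩ := abs_newton_step_eq_and_mem_Ioo hderiv hf0 hmono hν hρ hk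
    rw [hrec k, habs]
    exact ⟨rfl, hmem⟩
  have hmem : ∀ k, t k ∈ Ioo 0 ρ := by
    intro k
    induction k with
    | zero => exact ht0
    | succ k ih =>
      obtain ⟨hpos, hlt⟩ := (hstep k ih).2
      exact ⟨hpos, hlt.trans ih.2⟩
  have hanti : StrictAnti t := strictAnti_nat_of_succ_lt fun k => (hstep k (hmem k)).2.2
  have hmemν k : t k ∈ Ioo 0 ν := (mem_Ioo_and_div_sub_lt_self hρ (hmem k)).1
  intro k l hkl
  simp only [(hstep _ (hmem _)).1]
  exact h3 (hmemν l) (hmemν k) (hanti hkl)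

theorem stmt6 (R : ℝ) (hR : 0 < R) (f f' : ℝ → ℝ)
    (hderiv : ∀ t ∈ Set.Ico (0:ℝ) R, HasDerivWithinAt f (f' t) (Set.Ico 0 R) t)
    (hcont : ContinuousOn f' (Set.Ico 0 R))
    (hf0 : f 0 = 0) (hf'0 : f' 0 = -1)
    (hmono : StrictMonoOn f' (Set.Ico 0 R))
    (ν ρ : ℝ) (hν : ν = sSup {t ∈ Set.Ico 0 R | f' t < 0})
    (hρ : ρ = sSup {δ : ℝ | δ ∈ Set.Ioo 0 ν ∧ ∀ t ∈ Set.Ioo 0 δ, (f t / f' t - t) / t < 1})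
    (p : ℝ) (hp0 : 0 ≤ p) (hp1 : p ≤ 1)
    (h3 : StrictMonoOn (fun t => (f t / f' t - t) / t ^ (p + 1)) (Set.Ioo 0 ν))
    (t : ℕ → ℝ) (ht0 : t 0 ∈ Set.Ioo 0 ρ)
    (hrec : ∀ k, t (k + 1) = |t k - f (t k) / f' (t k)|) :
    StrictAnti (fun k => t (k + 1) / t k ^ (p + 1)) :=
  stmt6_general R f f' hderiv hf0 hmono ν ρ hν hρ p h3 t ht0 hrec
end

section
/- The function f : [0,∞) → ℝ defined by f(t) = t^{1+p} − t, for fixed 0 < p ≤ 1, satisfies: f(0)=0, f'(0)=−1, f' is strictly increasing, and t ↦ (f(t)/f'(t) − t)/t^{p+1} is strictly increasing on (0, ν) where ν = sup{t ≥ 0 : f'(t) < 0}. -/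
/-!
On the region where `f' < 0`, the quantity `(f t / f' t - t) / t ^ (p + 1)` simplifies to
`-p / f' t`, because `t f'(t) = (1 + p) t ^ (1 + p) - t` differs from `f t` by `p t ^ (1 + p)`.
Since `f'` is strictly increasing and negative there, `-p / f'` is strictly increasing.
-/

open Set

lemma hasDerivAt_rpow_one_add_sub_self {p : ℝ} (hp : 0 ≤ p) (t : ℝ) :
    HasDerivAt (fun t => t ^ (1 + p) - t) ((1 + p) * t ^ p - 1) t := by
  have h := (Real.hasDerivAt_rpow_const (x := t) (p := 1 + p) (Or.inr (by linarith))).sub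
    (hasDerivAt_id' t)
  rwa [add_sub_cancel_left] at h

lemma strictMonoOn_one_add_mul_rpow_sub_one {p : ℝ} (hp : 0 < p) :
    StrictMonoOn (fun t => (1 + p) * t ^ p - 1) (Ici 0) := by
  intro a ha b _ hab
  have : a ^ p < b ^ p := Real.rpow_lt_rpow ha hab hp
  dsimp only
  nlinarith

lemma neg_of_lt_sSup_setOf_neg {g : ℝ → ℝ} (hg : MonotoneOn g (Ici 0)) {t : ℝ} (ht : 0 ≤ t)
    (htS : t < sSup {s | 0 ≤ s ∧ g s < 0}) : g t < 0 := by
  rcases eq_empty_or_nonempty {s | 0 ≤ s ∧ g s < 0} with hS | hS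
  · rw [hS, Real.sSup_empty] at htS
    exact absurd ht htS.not_ge
  · obtain ⟨s, ⟨hs, hgs⟩, hts⟩ := exists_lt_of_lt_csSup hS htS
    exact (hg ht hs hts.le).trans_lt hgs

lemma div_rpow_one_add_sub_self_eq {p t : ℝ} (ht : 0 < t) (hne : (1 + p) * t ^ p - 1 ≠ 0) :
    ((t ^ (1 + p) - t) / ((1 + p) * t ^ p - 1) - t) / t ^ (p + 1)
      = -p / ((1 + p) * t ^ p - 1) := by
  have hpow : t ^ (p + 1) = t * t ^ p := by rw [Real.rpow_add_one ht.ne', mul_comm]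
  have htp : t ^ p ≠ 0 := (Real.rpow_pos_of_pos ht p).ne'
  have hpow' : t ^ (1 + p) = t * t ^ p := by rw [add_comm, hpow]
  rw [hpow, hpow', div_sub' hne, div_div,
    div_eq_div_iff (mul_ne_zero hne (mul_ne_zero ht.ne' htp)) hne]
  ring

lemma StrictMonoOn.neg_div_of_neg {g : ℝ → ℝ} {s : Set ℝ} {c : ℝ} (hc : 0 < c)
    (hg : StrictMonoOn g s) (hneg : ∀ t ∈ s, g t < 0) :
    StrictMonoOn (fun t => -c / g t) s := by
  intro a ha b hb hab
  simp only [← div_neg_eq_neg_div']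
  exact div_lt_div_of_pos_left hc (neg_pos.2 (hneg b hb)) (neg_lt_neg (hg ha hb hab))

theorem stmt7_general (p : ℝ) (hp : 0 < p)
    (f f' : ℝ → ℝ)
    (hf : f = fun t => t ^ (1 + p) - t)
    (hf' : f' = fun t => (1 + p) * t ^ p - 1)
    (ν : ℝ) (hν : ν = sSup {t : ℝ | 0 ≤ t ∧ f' t < 0}) :
    f 0 = 0 ∧ f' 0 = -1 ∧
      (∀ t ∈ Set.Ici (0:ℝ), HasDerivWithinAt f (f' t) (Set.Ici 0) t) ∧
      StrictMonoOn f' (Set.Ici 0) ∧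
      StrictMonoOn (fun t => (f t / f' t - t) / t ^ (p + 1)) (Set.Ioo 0 ν) := by
  subst hf hf' hν
  have hmono := strictMonoOn_one_add_mul_rpow_sub_one hp
  have hneg : ∀ t ∈ Ioo 0 (sSup {t : ℝ | 0 ≤ t ∧ (1 + p) * t ^ p - 1 < 0}),
      (1 + p) * t ^ p - 1 < 0 :=
    fun t ht => neg_of_lt_sSup_setOf_neg hmono.monotoneOn ht.1.le ht.2
  refine ⟨by simp [Real.zero_rpow (by linarith : 1 + p ≠ 0)], by simp [Real.zero_rpow hp.ne'],
    fun t _ => (hasDerivAt_rpow_one_add_sub_self hp.le t).hasDerivWithinAt, hmono, ?_⟩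
  refine ((hmono.mono fun _ ht => ht.1.le).neg_div_of_neg hp hneg).congr fun t ht => ?_
  exact (div_rpow_one_add_sub_self_eq ht.1 (hneg t ht).ne).symm

theorem stmt7 (p : ℝ) (hp : 0 < p) (hp1 : p ≤ 1)
    (f f' : ℝ → ℝ)
    (hf : f = fun t => t ^ (1 + p) - t)
    (hf' : f' = fun t => (1 + p) * t ^ p - 1)
    (ν : ℝ) (hν : ν = sSup {t : ℝ | 0 ≤ t ∧ f' t < 0}) :
    f 0 = 0 ∧ f' 0 = -1 ∧
      (∀ t ∈ Set.Ici (0:ℝ), HasDerivWithinAt f (f' t) (Set.Ici 0) t) ∧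
      StrictMonoOn f' (Set.Ici 0) ∧
      StrictMonoOn (fun t => (f t / f' t - t) / t ^ (p + 1)) (Set.Ioo 0 ν) :=
  stmt7_general p hp f f' hf hf' ν hν
end

section
/- Under the majorant condition, for any x with ‖x − x*‖ < κ, the linearization error satisfies β‖F(x*) − F(x) − F'(x)(x* − x)‖ ≤ f(0) − f(‖x−x*‖) − f'(‖x−x*‖)(0 − ‖x−x*‖), i.e. β‖E_F(x,x*)‖ ≤ e_f(‖x−x*‖, 0). -/
open Set Metric

theorem exists_ball_subset_of_dist_lt_sSup {X : Type*} [PseudoMetricSpace X] {Ω : Set X}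
    {xs x : X} {R : ℝ} (hx : dist x xs < sSup {t ∈ Ico 0 R | ball xs t ⊆ Ω}) :
    ∃ t < R, dist x xs < t ∧ ball xs t ⊆ Ω := by
  have hne : {t ∈ Ico 0 R | ball xs t ⊆ Ω}.Nonempty := by
    by_contra h
    rw [not_nonempty_iff_eq_empty.1 h, Real.sSup_empty] at hx
    exact dist_nonneg.not_gt hx
  obtain ⟨t, ⟨⟨-, htR⟩, hball⟩, hxt⟩ := exists_lt_of_lt_csSup hne hx
  exact ⟨t, htR, hxt, hball⟩

theorem HasDerivWithinAt.comp_mul_const_Icc {f f' : ℝ → ℝ} {r τ : ℝ} (hr : 0 ≤ r)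
    (hf : ∀ t ∈ Icc 0 r, HasDerivWithinAt f (f' t) (Icc 0 r) t) (hτ : τ ∈ Icc (0:ℝ) 1) :
    HasDerivWithinAt (fun τ => f (τ * r)) (f' (τ * r) * r) (Icc 0 1) τ := by
  have hscale : MapsTo (fun τ : ℝ => τ * r) (Icc 0 1) (Icc 0 r) := fun τ hτ =>
    ⟨mul_nonneg hτ.1 hr, mul_le_of_le_one_left hr hτ.2⟩
  exact (hf _ (hscale hτ)).comp τ (hasDerivAt_mul_const r).hasDerivWithinAt hscale

theorem norm_sub_add_fderiv_le_of_majorant {E G : Type*} [NormedAddCommGroup E] [NormedSpace ℝ E]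
    [NormedAddCommGroup G] [NormedSpace ℝ G] {F : E → G} {F' : E → E →L[ℝ] G} {f f' : ℝ → ℝ}
    {β : ℝ} {a b : E} (hβ : 0 ≤ β)
    (hF : ∀ τ ∈ Icc (0:ℝ) 1, HasFDerivAt F (F' (a + τ • (b - a))) (a + τ • (b - a)))
    (hf : ∀ t ∈ Icc 0 ‖b - a‖, HasDerivWithinAt f (f' t) (Icc 0 ‖b - a‖) t)
    (hmaj : ∀ τ ∈ Icc (0:ℝ) 1,
      β * ‖F' b - F' (a + τ • (b - a))‖ ≤ f' ‖b - a‖ - f' (τ * ‖b - a‖)) :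
    β * ‖F a - (F b + F' b (a - b))‖ ≤ f 0 - (f ‖b - a‖ + f' ‖b - a‖ * (0 - ‖b - a‖)) := by
  set v := b - a
  set r := ‖v‖
  set g : ℝ → G := fun τ => β • (F (a + τ • v) - F a - τ • F' b v)
  set B : ℝ → ℝ := fun τ => τ * (f' r * r) - f (τ * r) + f 0
  have hg : ∀ τ ∈ Icc (0:ℝ) 1, HasDerivAt g (β • (F' (a + τ • v) v - F' b v)) τ := by
    intro τ hτ
    have hline : HasDerivAt (fun τ : ℝ => a + τ • v) v τ := by
      simpa using ((hasDerivAt_id τ).smul_const v).const_add a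
    exact ((((hF τ hτ).comp_hasDerivAt τ hline).sub_const (F a)
      |>.sub ((hasDerivAt_id τ).smul_const (F' b v))).const_smul β).congr_deriv (by simp)
  have hB : ∀ τ ∈ Icc (0:ℝ) 1, HasDerivWithinAt B (f' r * r - f' (τ * r) * r) (Icc 0 1) τ :=
    fun τ hτ => ((hasDerivAt_mul_const (f' r * r)).hasDerivWithinAt.sub
      (.comp_mul_const_Icc (norm_nonneg v) hf hτ)).add_const (f 0)
  have hbound : ∀ τ ∈ Ico (0:ℝ) 1,
      ‖β • (F' (a + τ • v) v - F' b v)‖ ≤ f' r * r - f' (τ * r) * r := by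
    intro τ hτ
    calc ‖β • (F' (a + τ • v) v - F' b v)‖ = β * ‖(F' b - F' (a + τ • v)) v‖ := by
          rw [norm_smul, Real.norm_of_nonneg hβ, ← norm_neg]; simp
      _ ≤ β * ‖F' b - F' (a + τ • v)‖ * r := by
          rw [mul_assoc]; exact mul_le_mul_of_nonneg_left ((F' b - _).le_opNorm v) hβ
      _ ≤ (f' r - f' (τ * r)) * r :=
          mul_le_mul_of_nonneg_right (hmaj τ (Ico_subset_Icc_self hτ)) (norm_nonneg v)
      _ = f' r * r - f' (τ * r) * r := by ring
  have key := image_norm_le_of_norm_deriv_right_le_deriv_boundary'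
    (fun τ hτ => (hg τ hτ).continuousAt.continuousWithinAt)
    (fun τ hτ => (hg τ (Ico_subset_Icc_self hτ)).hasDerivWithinAt) (by simp [g, B])
    (fun τ hτ => (hB τ hτ).continuousWithinAt)
    (fun τ hτ => (hB τ (Ico_subset_Icc_self hτ)).mono_of_mem_nhdsWithin
      (Icc_mem_nhdsGE_of_mem hτ)) hbound (right_mem_Icc.2 zero_le_one)
  have hlin : F' b (a - b) = -F' b v := by rw [← map_neg, neg_sub]
  calc β * ‖F a - (F b + F' b (a - b))‖ = ‖g 1‖ := by
        rw [norm_smul, Real.norm_of_nonneg hβ, ← norm_neg, hlin]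
        simp only [v, one_smul, add_sub_cancel]
        congr 2; abel
    _ ≤ B 1 := key
    _ = f 0 - (f r + f' r * (0 - r)) := by simp only [B, one_mul]; ring

theorem stmt10_general
    {X Y : Type*} [NormedAddCommGroup X] [InnerProductSpace ℝ X] [CompleteSpace X]
    [NormedAddCommGroup Y] [InnerProductSpace ℝ Y] [CompleteSpace Y]
    (Ω : Set X) (F : X → Y) (Fp : X → X →L[ℝ] Y)
    (hF : ∀ x ∈ Ω, HasFDerivAt F (Fp x) x)
    (xs : X)
    (R : ℝ)
    (β κ : ℝ) (hβ : β = ‖pinv (Fp xs)‖)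
    (hκ : κ = sSup {t ∈ Set.Ico 0 R | Metric.ball xs t ⊆ Ω})
    (f fp : ℝ → ℝ)
    (hderiv : ∀ t ∈ Set.Ico (0:ℝ) R, HasDerivWithinAt f (fp t) (Set.Ico 0 R) t)
    (hmaj : ∀ τ ∈ Set.Icc (0:ℝ) 1, ∀ x ∈ Metric.ball xs κ,
      β * ‖Fp x - Fp (xs + τ • (x - xs))‖ ≤ fp ‖x - xs‖ - fp (τ * ‖x - xs‖))
    (x : X) (hx : ‖x - xs‖ < κ) :
    β * ‖F xs - (F x + Fp x (xs - x))‖ ≤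
      f 0 - (f ‖x - xs‖ + fp ‖x - xs‖ * (0 - ‖x - xs‖)) := by
  obtain ⟨t, htR, hxt, hball⟩ :=
    exists_ball_subset_of_dist_lt_sSup (Ω := Ω) (R := R) (by rwa [dist_eq_norm, ← hκ])
  rw [dist_eq_norm] at hxt
  refine norm_sub_add_fderiv_le_of_majorant (hβ ▸ norm_nonneg (pinv (Fp xs))) (fun τ hτ => hF _ (hball ?_))
    (fun s hs => ?_) (fun τ hτ => hmaj τ hτ x (mem_ball_iff_norm.2 hx))
  · exact (convex_ball xs t).add_smul_sub_mem (mem_ball_self ((norm_nonneg _).trans_lt hxt))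
      (mem_ball_iff_norm.2 hxt) hτ
  · exact (hderiv s ⟨hs.1, hs.2.trans_lt (hxt.trans htR)⟩).mono
      (Icc_subset_Ico_right (hxt.trans htR))

theorem stmt10
    {X Y : Type*} [NormedAddCommGroup X] [InnerProductSpace ℝ X] [CompleteSpace X]
    [NormedAddCommGroup Y] [InnerProductSpace ℝ Y] [CompleteSpace Y]
    (Ω : Set X) (hΩ : IsOpen Ω) (F : X → Y) (Fp : X → X →L[ℝ] Y)
    (hF : ∀ x ∈ Ω, HasFDerivAt F (Fp x) x)
    (hclosed : ∀ x ∈ Ω, IsClosed (Set.range ((Fp x) : X → Y)))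
    (xs : X) (hxs : xs ∈ Ω) (hFxs : F xs = 0) (hinj : Function.Injective ((Fp xs) : X → Y))
    (R : ℝ) (hR : 0 < R)
    (β κ : ℝ) (hβ : β = ‖pinv (Fp xs)‖)
    (hκ : κ = sSup {t ∈ Set.Ico 0 R | Metric.ball xs t ⊆ Ω})
    (f fp : ℝ → ℝ)
    (hderiv : ∀ t ∈ Set.Ico (0:ℝ) R, HasDerivWithinAt f (fp t) (Set.Ico 0 R) t)
    (hcont : ContinuousOn fp (Set.Ico 0 R))
    (hmaj : ∀ τ ∈ Set.Icc (0:ℝ) 1, ∀ x ∈ Metric.ball xs κ,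
      β * ‖Fp x - Fp (xs + τ • (x - xs))‖ ≤ fp ‖x - xs‖ - fp (τ * ‖x - xs‖))
    (hf0 : f 0 = 0) (hfp0 : fp 0 = -1) (hmono : StrictMonoOn fp (Set.Ico 0 R))
    (x : X) (hx : ‖x - xs‖ < κ) :
    β * ‖F xs - (F x + Fp x (xs - x))‖ ≤
      f 0 - (f ‖x - xs‖ + fp ‖x - xs‖ * (0 - ‖x - xs‖)) :=
  stmt10_general Ω F Fp hF xs R β κ hβ hκ f fp hderiv hmaj x hx
end

section
/- Let f satisfy h1, h2 and suppose f(ρ)/(ρ f'(ρ)) − 1 = 1. Define h : (−κ, κ) → ℝ by h(t) = −f(−t) for t ≤ 0 and h(t) = f(t) for t ≥ 0. Then Newton's method applied to h starting at x₀ = −ρ produces the 2-cycle x₀ = −ρ, x₁ = ρ, x₂ = −ρ, ..., hence does not converge. -/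
theorem stmt13 (R κ : ℝ) (hR : 0 < R) (hκR : κ ≤ R) (hκ : 0 < κ)
    (f f' : ℝ → ℝ)
    (hderiv : ∀ t ∈ Set.Ico (0:ℝ) R, HasDerivWithinAt f (f' t) (Set.Ico 0 R) t)
    (hcont : ContinuousOn f' (Set.Ico 0 R))
    (hf0 : f 0 = 0) (hf'0 : f' 0 = -1)
    (hmono : StrictMonoOn f' (Set.Ico 0 R))
    (ν ρ : ℝ) (hν : ν = sSup {t ∈ Set.Ico 0 R | f' t < 0})
    (hρ : ρ = sSup {δ : ℝ | δ ∈ Set.Ioo 0 ν ∧ ∀ t ∈ Set.Ioo 0 δ, (f t / f' t - t) / t < 1})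
    (hρκ : ρ < κ)
    (hcycle : f ρ / (ρ * f' ρ) - 1 = 1)
    (h : ℝ → ℝ) (hh : ∀ t, h t = if t ≤ 0 then -f (-t) else f t)
    (x : ℕ → ℝ) (hx0 : x 0 = -ρ)
    (hxrec : ∀ k, x (k + 1) = x k - h (x k) / f' |x k|) :
    (∀ k, x (2 * k) = -ρ ∧ x (2 * k + 1) = ρ) ∧
      ¬ ∃ a : ℝ, Filter.Tendsto x Filter.atTop (nhds a) := by
  have hne : ρ * f' ρ ≠ 0 := by
    intro h0; rw [h0, div_zero] at hcycle; norm_num at hcycle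
  have hρ0 : 0 ≤ ρ := by
    rw [hρ]
    apply Real.sSup_nonneg
    rintro d ⟨⟨hd, _⟩, _⟩
    exact hd.le
  have hρpos : 0 < ρ := lt_of_le_of_ne hρ0 (fun e => hne (by rw [← e]; ring))
  have hf'ne : f' ρ ≠ 0 := right_ne_zero_of_mul hne
  have hkey : f ρ / f' ρ = 2 * ρ := by
    have h2 : f ρ / (ρ * f' ρ) = 2 := by linarith
    rw [div_eq_iff hne] at h2
    field_simp
    linarith
  have stepA : ∀ k, x k = -ρ → x (k + 1) = ρ := by
    intro k hk
    rw [hxrec, hk, hh, if_pos (by linarith : -ρ ≤ 0), neg_neg, abs_neg,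
      abs_of_pos hρpos, neg_div]
    linarith
  have stepB : ∀ k, x k = ρ → x (k + 1) = -ρ := by
    intro k hk
    rw [hxrec, hk, hh, if_neg (not_le.mpr hρpos), abs_of_pos hρpos]
    linarith
  have key : ∀ k, x (2 * k) = -ρ ∧ x (2 * k + 1) = ρ := by
    intro k
    induction k with
    | zero => exact ⟨hx0, stepA 0 hx0⟩
    | succ n ih =>
      have h1 : x (2 * (n + 1)) = -ρ := by
        have := stepB (2 * n + 1) ih.2
        simpa [Nat.mul_succ] using this
      exact ⟨h1, stepA _ h1⟩
  refine ⟨key, ?_⟩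
  rintro ⟨a, ha⟩
  have g1 : Filter.Tendsto (fun k : ℕ => 2 * k) Filter.atTop Filter.atTop :=
    Filter.tendsto_atTop_mono (fun k => by simp; omega) Filter.tendsto_id
  have g2 : Filter.Tendsto (fun k : ℕ => 2 * k + 1) Filter.atTop Filter.atTop :=
    Filter.tendsto_atTop_mono (fun k => by simp; omega) Filter.tendsto_id
  have h1 : Filter.Tendsto (fun k => x (2 * k)) Filter.atTop (nhds a) := ha.comp g1
  have h2 : Filter.Tendsto (fun k => x (2 * k + 1)) Filter.atTop (nhds a) := ha.comp g2
  have e1 : (fun k => x (2 * k)) = fun _ => -ρ := funext fun k => (key k).1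
  have e2 : (fun k => x (2 * k + 1)) = fun _ => ρ := funext fun k => (key k).2
  rw [e1] at h1; rw [e2] at h2
  have := tendsto_nhds_unique h1 tendsto_const_nhds
  have := tendsto_nhds_unique h2 tendsto_const_nhds
  linarith
end

section
/- Under the hypotheses of the main theorem, the Gauss–Newton sequence x_{k+1} = x_k − F'(x_k)†F(x_k) starting from x₀ ∈ B(x*, r)\{x*} is well defined, remains in B(x*, r), converges to x*, and converges superlinearly: lim_{k→∞} ‖x_{k+1} − x*‖/‖x_k − x*‖ = 0. -/
open Set Filter Topology ContinuousLinearMap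
open scoped RealInnerProductSpace

section PseudoInverse

variable {X Y : Type*} [NormedAddCommGroup X] [InnerProductSpace ℝ X] [CompleteSpace X]
  [NormedAddCommGroup Y] [InnerProductSpace ℝ Y] [CompleteSpace Y]
  {A : X →L[ℝ] Y}

lemma inner_adjoint_comp_self_apply_self (A : X →L[ℝ] Y) (u : X) :
    ⟪(adjoint A ∘L A) u, u⟫ = ‖A u‖ ^ 2 := by
  simpa using (A.apply_norm_sq_eq_inner_adjoint_left u).symm

lemma isUnit_adjoint_comp_self (hinj : Function.Injective A) (hcl : IsClosed (range A)) :
    IsUnit (adjoint A ∘L A) := by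
  set T := adjoint A ∘L A
  obtain ⟨K, hK⟩ := A.antilipschitz_of_injective_of_isClosed_range hinj hcl
  have hTanti : AntilipschitzWith (K ^ 2) T := by
    refine T.antilipschitz_of_bound fun u => ?_
    have hAu : ‖u‖ ≤ K * ‖A u‖ := A.bound_of_antilipschitz hK u
    have hTu : ‖A u‖ ^ 2 ≤ ‖T u‖ * ‖u‖ :=
      (inner_adjoint_comp_self_apply_self A u).symm.le.trans (real_inner_le_norm _ _)
    rcases (norm_nonneg u).eq_or_lt with hu | hu
    · rw [← hu]; positivity
    · push_cast
      nlinarith [mul_le_mul_of_nonneg_left hAu (norm_nonneg u), sq_nonneg (K : ℝ),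
        mul_le_mul_of_nonneg_left hTu (sq_nonneg (K : ℝ))]
  have hker : T.ker = ⊥ := by
    rw [ker_adjoint_comp_self, LinearMap.ker_eq_bot]; exact hinj
  have hrange : T.range = ⊤ := by
    have : CompleteSpace T.range :=
      (hTanti.isClosed_range T.uniformContinuous).completeSpace_coe
    rw [← Submodule.orthogonal_eq_bot_iff, orthogonal_range, adjoint_comp, adjoint_adjoint, hker]
  exact isUnit_iff_bijective.mpr
    ⟨LinearMap.ker_eq_bot.mp hker, LinearMap.range_eq_top.mp hrange⟩

lemma pinv_apply_apply_s14 (hinj : Function.Injective A) (hcl : IsClosed (range A)) (u : X) :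
    pinv A (A u) = u :=
  congr($(Ring.inverse_mul_cancel _ (isUnit_adjoint_comp_self hinj hcl)) u)

lemma norm_apply_pinv_apply_le_s14 (hinj : Function.Injective A) (hcl : IsClosed (range A)) (w : Y) :
    ‖A (pinv A w)‖ ≤ ‖w‖ := by
  have hT : (adjoint A ∘L A) (pinv A w) = adjoint A w :=
    congr($(Ring.mul_inverse_cancel _ (isUnit_adjoint_comp_self hinj hcl)) (adjoint A w))
  have hsq : ‖A (pinv A w)‖ ^ 2 ≤ ‖w‖ * ‖A (pinv A w)‖ := by
    rw [← inner_adjoint_comp_self_apply_self, hT, adjoint_inner_left]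
    exact real_inner_le_norm _ _
  nlinarith [norm_nonneg (A (pinv A w)), norm_nonneg w]

lemma norm_le_norm_pinv_mul_norm_apply (hinj : Function.Injective A) (hcl : IsClosed (range A))
    (u : X) : ‖u‖ ≤ ‖pinv A‖ * ‖A u‖ := by
  simpa [pinv_apply_apply_s14 hinj hcl] using (pinv A).le_opNorm (A u)

end PseudoInverse

section NormedSpace

variable {X Y : Type*} [NormedAddCommGroup X] [NormedSpace ℝ X]
  [NormedAddCommGroup Y] [NormedSpace ℝ Y]

lemma sub_mul_norm_le_of_norm_sub_le {A B : X →L[ℝ] Y} {β δ : ℝ} (hβ : 0 ≤ β)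
    (hA : ∀ u, ‖u‖ ≤ β * ‖A u‖) (hBA : β * ‖B - A‖ ≤ δ) (u : X) :
    (1 - δ) * ‖u‖ ≤ β * ‖B u‖ := by
  have hAB : ‖A u‖ ≤ ‖B u‖ + ‖B - A‖ * ‖u‖ := by
    calc ‖A u‖ = ‖B u - (B - A) u‖ := by simp
      _ ≤ ‖B u‖ + ‖B - A‖ * ‖u‖ := (norm_sub_le _ _).trans (by gcongr; exact le_opNorm _ _)
  nlinarith [hA u, mul_le_mul_of_nonneg_left hAB hβ, mul_le_mul_of_nonneg_right hBA (norm_nonneg u)]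

lemma norm_sub_sub_apply_le_of_majorant {F : X → Y} {Fp : X → X →L[ℝ] Y} {x₀ y : X}
    {f fp : ℝ → ℝ} {R β : ℝ}
    (hF : ∀ z ∈ segment ℝ x₀ y, HasFDerivAt F (Fp z) z)
    (hf : ∀ s ∈ Ico 0 R, HasDerivWithinAt f (fp s) (Ico 0 R) s) (hyR : ‖y - x₀‖ < R)
    (hβ : 0 ≤ β)
    (hmaj : ∀ τ ∈ Icc (0 : ℝ) 1,
      β * ‖Fp y - Fp (x₀ + τ • (y - x₀))‖ ≤ fp ‖y - x₀‖ - fp (τ * ‖y - x₀‖)) :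
    β * ‖F y - F x₀ - Fp y (y - x₀)‖ ≤ ‖y - x₀‖ * fp ‖y - x₀‖ - f ‖y - x₀‖ + f 0 := by
  set v := y - x₀
  set t := ‖v‖
  -- `g` and `B` vanish at `τ = 0` and `‖g'‖ ≤ B'` on `[0, 1)`, hence `‖g 1‖ ≤ B 1`
  set g : ℝ → Y := fun τ => β • (F (x₀ + τ • v) - F x₀ - τ • Fp y v)
  set B : ℝ → ℝ := fun τ => τ * (t * fp t) - f (τ * t) + f 0
  have hg : ∀ τ ∈ Icc (0 : ℝ) 1, HasDerivAt g (β • (Fp (x₀ + τ • v) v - Fp y v)) τ := by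
    intro τ hτ
    have hpath : HasDerivAt (fun σ : ℝ => x₀ + σ • v) v τ := by
      simpa using ((hasDerivAt_id τ).smul_const v).const_add x₀
    have hz : x₀ + τ • v ∈ segment ℝ x₀ y := segment_eq_image' ℝ x₀ y ▸ mem_image_of_mem _ hτ
    have h := ((((hF _ hz).comp_hasDerivAt τ hpath).sub_const (F x₀)).sub
      ((hasDerivAt_id τ).smul_const (Fp y v))).const_smul β
    rwa [one_smul] at h
  have hmaps : MapsTo (fun σ : ℝ => σ * t) (Icc 0 1) (Ico 0 R) := fun σ hσ =>
    ⟨mul_nonneg hσ.1 (norm_nonneg v),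
      (mul_le_of_le_one_left (norm_nonneg v) hσ.2).trans_lt hyR⟩
  have hB : ∀ τ ∈ Icc (0 : ℝ) 1, HasDerivWithinAt B (t * fp t - fp (τ * t) * t) (Icc 0 1) τ := by
    intro τ hτ
    have hft : HasDerivWithinAt (fun σ : ℝ => f (σ * t)) (fp (τ * t) * t) (Icc 0 1) τ :=
      (hf _ (hmaps hτ)).comp τ (hasDerivAt_mul_const t).hasDerivWithinAt hmaps
    exact (((hasDerivAt_mul_const (t * fp t)).hasDerivWithinAt.sub hft).add_const (f 0))
  have hbound : ∀ τ ∈ Ico (0 : ℝ) 1,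
      ‖β • (Fp (x₀ + τ • v) v - Fp y v)‖ ≤ t * fp t - fp (τ * t) * t := by
    intro τ hτ
    calc ‖β • (Fp (x₀ + τ • v) v - Fp y v)‖ = β * ‖(Fp y - Fp (x₀ + τ • v)) v‖ := by
          rw [norm_smul, Real.norm_of_nonneg hβ, ← norm_neg]; simp
      _ ≤ β * ‖Fp y - Fp (x₀ + τ • v)‖ * t := by
          rw [mul_assoc]; exact mul_le_mul_of_nonneg_left (le_opNorm _ _) hβ
      _ ≤ (fp t - fp (τ * t)) * t :=
          mul_le_mul_of_nonneg_right (hmaj τ (Ico_subset_Icc_self hτ)) (norm_nonneg v)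
      _ = t * fp t - fp (τ * t) * t := by ring
  have hcompare := image_norm_le_of_norm_deriv_right_le_deriv_boundary'
    (fun τ hτ => (hg τ hτ).continuousAt.continuousWithinAt)
    (fun τ hτ => (hg τ (Ico_subset_Icc_self hτ)).hasDerivWithinAt)
    (by simp [g, B]) (fun τ hτ => (hB τ hτ).continuousWithinAt)
    (fun τ hτ => (hB τ (Ico_subset_Icc_self hτ)).mono_of_mem_nhdsWithin
      (Icc_mem_nhdsGE_of_mem hτ))
    hbound (right_mem_Icc.mpr zero_le_one)
  simpa [g, B, v, norm_smul, Real.norm_of_nonneg hβ] using hcompare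

end NormedSpace

section Majorant

variable {f fp : ℝ → ℝ} {R : ℝ}

lemma exists_mem_lt_of_lt_sSup {s : Set ℝ} {b : ℝ} (hb0 : 0 ≤ b) (hb : b < sSup s) :
    ∃ a ∈ s, b < a := by
  refine exists_lt_of_lt_csSup (nonempty_iff_ne_empty.mpr ?_) hb
  rintro rfl
  rw [Real.sSup_empty] at hb
  exact hb.not_ge hb0

lemma ball_sSup_subset {E : Type*} [PseudoMetricSpace E] (x : E) (Ω : Set E) :
    Metric.ball x (sSup {t ∈ Ico 0 R | Metric.ball x t ⊆ Ω}) ⊆ Ω := by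
  intro z hz
  obtain ⟨t, ht, hzt⟩ := exists_mem_lt_of_lt_sSup dist_nonneg (Metric.mem_ball.mp hz)
  exact ht.2 hzt

lemma lt_and_neg_and_lt_of_lt_sSup (hmono : StrictMonoOn fp (Ico 0 R)) {t : ℝ} (ht0 : 0 ≤ t)
    (ht : t < sSup {δ : ℝ | δ ∈ Ioo 0 (sSup {s ∈ Ico 0 R | fp s < 0}) ∧
      ∀ s ∈ Ioo 0 δ, (f s / fp s - s) / s < 1}) :
    t < R ∧ fp t < 0 ∧ (0 < t → f t / fp t - t < t) := by
  obtain ⟨δ, ⟨hδ, hgap⟩, htδ⟩ := exists_mem_lt_of_lt_sSup ht0 ht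
  obtain ⟨s, ⟨hs, hfs⟩, hts⟩ := exists_mem_lt_of_lt_sSup ht0 (htδ.trans hδ.2)
  have htR : t < R := hts.trans hs.2
  exact ⟨htR, (hmono ⟨ht0, htR⟩ hs hts).trans hfs,
    fun ht0 => (div_lt_one ht0).mp (hgap t ⟨ht0, htδ⟩)⟩

lemma continuousOn_div_sub {s : Set ℝ} (hf : ∀ t ∈ Ico 0 R, HasDerivWithinAt f (fp t) (Ico 0 R) t)
    (hfp : ContinuousOn fp (Ico 0 R)) (hs : s ⊆ Ico 0 R) (hfp0 : ∀ t ∈ s, fp t ≠ 0) :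
    ContinuousOn (fun t => f t / fp t - t) s :=
  (ContinuousOn.div (fun t ht => ((hf t (hs ht)).continuousWithinAt).mono hs) (hfp.mono hs)
    hfp0).sub continuousOn_id

lemma tendsto_div_fp_sub_div_nhdsGT (hR : 0 < R)
    (hf : HasDerivWithinAt f (fp 0) (Ico 0 R) 0) (hfp : ContinuousWithinAt fp (Ico 0 R) 0)
    (hf0 : f 0 = 0) (hfp0 : fp 0 = -1) :
    Tendsto (fun t => (f t / fp t - t) / t) (𝓝[>] 0) (𝓝 0) := by
  have hle : 𝓝[>] (0 : ℝ) ≤ 𝓝[Ico 0 R] 0 := by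
    rw [← nhdsWithin_Ioo_eq_nhdsGT hR]; exact nhdsWithin_mono _ Ioo_subset_Ico_self
  have hslope : Tendsto (fun t => f t / t) (𝓝[>] 0) (𝓝 (-1)) := by
    have h := (hasDerivWithinAt_iff_tendsto_slope' (lt_irrefl 0)).mp
      ((hf.mono Ioo_subset_Ico_self).Ioi_of_Ioo hR)
    rw [hfp0] at h
    refine h.congr fun t => ?_
    rw [slope_def_field, hf0, sub_zero, sub_zero]
  have hlim := (hslope.div ((hfp.tendsto.mono_left hle).trans (by rw [hfp0]))
    (by norm_num)).sub_const 1
  rw [show (-1 : ℝ) / -1 - 1 = 0 by norm_num] at hlim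
  refine hlim.congr' (eventually_nhdsWithin_of_forall fun t (ht : 0 < t) => ?_)
  simp only [Pi.div_apply, sub_div, div_self ht.ne', div_div, mul_comm]

end Majorant

section Iteration

variable {g : ℝ → ℝ} {r : ℝ} {u : ℕ → ℝ}

lemma le_self_of_forall_lt (hg0 : g 0 = 0) (hlt : ∀ t ∈ Ioo 0 r, g t < t) {t : ℝ}
    (ht : t ∈ Ico 0 r) : g t ≤ t :=
  ht.1.eq_or_lt.elim (fun h => by rw [← h, hg0]) fun h => (hlt t ⟨h, ht.2⟩).le

lemma forall_lt_of_succ_le_apply (hg0 : g 0 = 0) (hlt : ∀ t ∈ Ioo 0 r, g t < t) (hu : ∀ k, 0 ≤ u k)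
    (hu0 : u 0 < r) (hstep : ∀ k, u k < r → u (k + 1) ≤ g (u k)) (k : ℕ) : u k < r := by
  induction k with
  | zero => exact hu0
  | succ k ih => exact ((hstep k ih).trans (le_self_of_forall_lt hg0 hlt ⟨hu k, ih⟩)).trans_lt ih

lemma tendsto_zero_of_succ_le_apply (hg0 : g 0 = 0) (hlt : ∀ t ∈ Ioo 0 r, g t < t)
    (hcont : ContinuousOn g (Ioo 0 r)) (hu : ∀ k, 0 ≤ u k) (hur : ∀ k, u k < r)
    (hstep : ∀ k, u (k + 1) ≤ g (u k)) : Tendsto u atTop (𝓝 0) := by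
  have hanti : Antitone u := antitone_nat_of_succ_le fun k =>
    (hstep k).trans (le_self_of_forall_lt hg0 hlt ⟨hu k, hur k⟩)
  have hbdd : BddBelow (range u) := ⟨0, forall_mem_range.mpr hu⟩
  have hlim := tendsto_atTop_ciInf hanti hbdd
  set L := ⨅ k, u k
  suffices hL : L = 0 by rwa [hL] at hlim
  by_contra hL
  have hLmem : L ∈ Ioo 0 r := ⟨(le_ciInf hu).lt_of_ne' hL, (ciInf_le hbdd 0).trans_lt (hur 0)⟩
  have hgL : Tendsto (fun k => g (u k)) atTop (𝓝 (g L)) :=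
    ((hcont.continuousAt (isOpen_Ioo.mem_nhds hLmem)).tendsto).comp hlim
  have hLle : L ≤ g L :=
    le_of_tendsto_of_tendsto' (hlim.comp (tendsto_add_atTop_nat 1)) hgL hstep
  exact (hlt L hLmem).not_ge hLle

lemma tendsto_succ_div_of_succ_le_apply (hratio : Tendsto (fun t => g t / t) (𝓝[>] 0) (𝓝 0))
    (hu : ∀ k, 0 ≤ u k) (hlim : Tendsto u atTop (𝓝 0)) (hstep : ∀ k, u (k + 1) ≤ g (u k)) :
    Tendsto (fun k => u (k + 1) / u k) atTop (𝓝 0) := by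
  -- at `t = 0` the comparison reads `0 ≤ 0`, since `x / 0 = 0`
  have hratio' : Tendsto (fun t => g t / t) (𝓝[≥] 0) (𝓝 0) := by
    rw [← Ioi_insert, nhdsWithin_insert, tendsto_sup]
    exact ⟨by simpa using tendsto_pure_nhds (fun t => g t / t) 0, hratio⟩
  refine squeeze_zero (fun k => div_nonneg (hu _) (hu k))
    (fun k => div_le_div_of_nonneg_right (hstep k) (hu k)) (hratio'.comp ?_)
  exact tendsto_nhdsWithin_iff.mpr ⟨hlim, .of_forall hu⟩

end Iteration

section GaussNewton

variable {X Y : Type*} [NormedAddCommGroup X] [InnerProductSpace ℝ X] [CompleteSpace X]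
  [NormedAddCommGroup Y] [InnerProductSpace ℝ Y] [CompleteSpace Y]

lemma norm_gaussNewton_sub_le {F : X → Y} {Fp : X → X →L[ℝ] Y} {xs y : X} {f fp : ℝ → ℝ}
    {R β : ℝ}
    (hF : ∀ z ∈ segment ℝ xs y, HasFDerivAt F (Fp z) z)
    (hcl : IsClosed (range (Fp y))) (hFxs : F xs = 0) (hβ : 0 ≤ β)
    (hβxs : ∀ u, ‖u‖ ≤ β * ‖Fp xs u‖)
    (hf : ∀ s ∈ Ico 0 R, HasDerivWithinAt f (fp s) (Ico 0 R) s) (hf0 : f 0 = 0) (hfp0 : fp 0 = -1)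
    (hyR : ‖y - xs‖ < R) (hfpy : fp ‖y - xs‖ < 0)
    (hmaj : ∀ τ ∈ Icc (0 : ℝ) 1,
      β * ‖Fp y - Fp (xs + τ • (y - xs))‖ ≤ fp ‖y - xs‖ - fp (τ * ‖y - xs‖)) :
    ‖y - pinv (Fp y) (F y) - xs‖ ≤ f ‖y - xs‖ / fp ‖y - xs‖ - ‖y - xs‖ := by
  set t := ‖y - xs‖
  have hlow : ∀ u, -fp t * ‖u‖ ≤ β * ‖Fp y u‖ := by
    have h := hmaj 0 (left_mem_Icc.mpr zero_le_one)
    rw [zero_smul, add_zero, zero_mul, hfp0] at h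
    simpa using sub_mul_norm_le_of_norm_sub_le hβ hβxs (h.trans_eq (sub_neg_eq_add _ _))
  have hinj : Function.Injective (Fp y) := (injective_iff_map_eq_zero _).mpr fun u hu => by
    have h := hlow u
    rw [hu, norm_zero, mul_zero] at h
    exact norm_le_zero_iff.mp (nonpos_of_mul_nonpos_right h (neg_pos.mpr hfpy))
  have hres : y - pinv (Fp y) (F y) - xs = pinv (Fp y) (Fp y (y - xs) - F y) := by
    rw [map_sub, pinv_apply_apply_s14 hinj hcl]; abel
  have htaylor := norm_sub_sub_apply_le_of_majorant hF hf hyR hβ hmaj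
  rw [hFxs, hf0, sub_zero, add_zero] at htaylor
  have hmain : -fp t * ‖y - pinv (Fp y) (F y) - xs‖ ≤ t * fp t - f t := by
    calc -fp t * ‖y - pinv (Fp y) (F y) - xs‖
        ≤ β * ‖Fp y (pinv (Fp y) (Fp y (y - xs) - F y))‖ := hres ▸ hlow _
      _ ≤ β * ‖F y - Fp y (y - xs)‖ := by
          rw [← norm_neg (F y - _), neg_sub]
          exact mul_le_mul_of_nonneg_left (norm_apply_pinv_apply_le_s14 hinj hcl _) hβ
      _ ≤ t * fp t - f t := htaylor
  rw [div_sub' hfpy.ne, le_div_iff_of_neg hfpy]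
  linarith

end GaussNewton

theorem stmt14_general
    {X Y : Type*} [NormedAddCommGroup X] [InnerProductSpace ℝ X] [CompleteSpace X]
    [NormedAddCommGroup Y] [InnerProductSpace ℝ Y] [CompleteSpace Y]
    (Ω : Set X) (F : X → Y) (Fp : X → X →L[ℝ] Y)
    (hF : ∀ x ∈ Ω, HasFDerivAt F (Fp x) x)
    (hclosed : ∀ x ∈ Ω, IsClosed (Set.range ((Fp x) : X → Y)))
    (xs : X) (hxs : xs ∈ Ω) (hFxs : F xs = 0) (hinj : Function.Injective ((Fp xs) : X → Y))
    (R : ℝ)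
    (β κ : ℝ) (hβ : β = ‖pinv (Fp xs)‖)
    (hκ : κ = sSup {t ∈ Set.Ico 0 R | Metric.ball xs t ⊆ Ω})
    (f fp : ℝ → ℝ)
    (hderiv : ∀ t ∈ Set.Ico (0:ℝ) R, HasDerivWithinAt f (fp t) (Set.Ico 0 R) t)
    (hcont : ContinuousOn fp (Set.Ico 0 R))
    (hmaj : ∀ τ ∈ Set.Icc (0:ℝ) 1, ∀ x ∈ Metric.ball xs κ,
      β * ‖Fp x - Fp (xs + τ • (x - xs))‖ ≤ fp ‖x - xs‖ - fp (τ * ‖x - xs‖))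
    (hf0 : f 0 = 0) (hfp0 : fp 0 = -1) (hmono : StrictMonoOn fp (Set.Ico 0 R))
    (ν ρ r : ℝ) (hν : ν = sSup {t ∈ Set.Ico 0 R | fp t < 0})
    (hρ : ρ = sSup {δ : ℝ | δ ∈ Set.Ioo 0 ν ∧ ∀ t ∈ Set.Ioo 0 δ, (f t / fp t - t) / t < 1})
    (hr : r = min κ ρ)
    (x : ℕ → X) (hx0 : x 0 ∈ Metric.ball xs r)
    (hxrec : ∀ k, x (k + 1) = x k - pinv (Fp (x k)) (F (x k))) :
    (∀ k, x k ∈ Metric.ball xs r) ∧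
      Filter.Tendsto x Filter.atTop (nhds xs) ∧
      Filter.Tendsto (fun k => ‖x (k + 1) - xs‖ / ‖x k - xs‖) Filter.atTop (nhds 0) := by
  have hrκ : r ≤ κ := hr ▸ min_le_left _ _
  have hbelow : ∀ t ∈ Ico 0 r, t < R ∧ fp t < 0 ∧ (0 < t → f t / fp t - t < t) := fun t ht =>
    lt_and_neg_and_lt_of_lt_sSup hmono ht.1 (hν ▸ hρ ▸ ht.2.trans_le (hr ▸ min_le_right _ _))
  have hstep : ∀ y ∈ Metric.ball xs r,
      ‖y - pinv (Fp y) (F y) - xs‖ ≤ f ‖y - xs‖ / fp ‖y - xs‖ - ‖y - xs‖ := by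
    intro y hy
    have hyκ : y ∈ Metric.ball xs κ := Metric.ball_subset_ball hrκ hy
    have hseg : segment ℝ xs y ⊆ Ω := ((convex_ball xs κ).segment_subset
      (Metric.mem_ball_self (Metric.pos_of_mem_ball hyκ)) hyκ).trans (hκ ▸ ball_sSup_subset xs Ω)
    obtain ⟨hyR, hfpy, -⟩ := hbelow _ ⟨norm_nonneg _, mem_ball_iff_norm.mp hy⟩
    exact norm_gaussNewton_sub_le (fun z hz => hF z (hseg hz))
      (hclosed y (hseg (right_mem_segment ℝ xs y))) hFxs
      (hβ ▸ norm_nonneg _) (hβ ▸ norm_le_norm_pinv_mul_norm_apply hinj (hclosed xs hxs))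
      hderiv hf0 hfp0 hyR hfpy (fun τ hτ => hmaj τ hτ y hyκ)
  have hR : 0 < R := (hbelow 0 ⟨le_rfl, Metric.pos_of_mem_ball hx0⟩).1
  have hgap0 : f 0 / fp 0 - 0 = 0 := by simp [hf0]
  have hgap : ∀ t ∈ Ioo 0 r, f t / fp t - t < t := fun t ht => (hbelow t ⟨ht.1.le, ht.2⟩).2.2 ht.1
  have hur : ∀ k, ‖x k - xs‖ < r :=
    forall_lt_of_succ_le_apply (g := fun t => f t / fp t - t) hgap0 hgap (fun _ => norm_nonneg _)
      (mem_ball_iff_norm.mp hx0) fun k hk => hxrec k ▸ hstep _ (mem_ball_iff_norm.mpr hk)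
  have hiter : ∀ k, ‖x (k + 1) - xs‖ ≤ f ‖x k - xs‖ / fp ‖x k - xs‖ - ‖x k - xs‖ :=
    fun k => hxrec k ▸ hstep _ (mem_ball_iff_norm.mpr (hur k))
  have hlim : Tendsto (fun k => ‖x k - xs‖) atTop (𝓝 0) :=
    tendsto_zero_of_succ_le_apply (g := fun t => f t / fp t - t) hgap0 hgap
      (continuousOn_div_sub hderiv hcont (fun t ht => ⟨ht.1.le, (hbelow t ⟨ht.1.le, ht.2⟩).1⟩)
        fun t ht => (hbelow t ⟨ht.1.le, ht.2⟩).2.1.ne) (fun _ => norm_nonneg _) hur hiter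
  exact ⟨fun k => mem_ball_iff_norm.mpr (hur k), tendsto_iff_norm_sub_tendsto_zero.mpr hlim,
    tendsto_succ_div_of_succ_le_apply (tendsto_div_fp_sub_div_nhdsGT hR (hderiv 0 ⟨le_rfl, hR⟩)
      (hcont 0 ⟨le_rfl, hR⟩) hf0 hfp0) (fun _ => norm_nonneg _) hlim hiter⟩

theorem stmt14
    {X Y : Type*} [NormedAddCommGroup X] [InnerProductSpace ℝ X] [CompleteSpace X]
    [NormedAddCommGroup Y] [InnerProductSpace ℝ Y] [CompleteSpace Y]
    (Ω : Set X) (hΩ : IsOpen Ω) (F : X → Y) (Fp : X → X →L[ℝ] Y)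
    (hF : ∀ x ∈ Ω, HasFDerivAt F (Fp x) x)
    (hclosed : ∀ x ∈ Ω, IsClosed (Set.range ((Fp x) : X → Y)))
    (xs : X) (hxs : xs ∈ Ω) (hFxs : F xs = 0) (hinj : Function.Injective ((Fp xs) : X → Y))
    (R : ℝ) (hR : 0 < R)
    (β κ : ℝ) (hβ : β = ‖pinv (Fp xs)‖)
    (hκ : κ = sSup {t ∈ Set.Ico 0 R | Metric.ball xs t ⊆ Ω})
    (f fp : ℝ → ℝ)
    (hderiv : ∀ t ∈ Set.Ico (0:ℝ) R, HasDerivWithinAt f (fp t) (Set.Ico 0 R) t)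
    (hcont : ContinuousOn fp (Set.Ico 0 R))
    (hmaj : ∀ τ ∈ Set.Icc (0:ℝ) 1, ∀ x ∈ Metric.ball xs κ,
      β * ‖Fp x - Fp (xs + τ • (x - xs))‖ ≤ fp ‖x - xs‖ - fp (τ * ‖x - xs‖))
    (hf0 : f 0 = 0) (hfp0 : fp 0 = -1) (hmono : StrictMonoOn fp (Set.Ico 0 R))
    (ν ρ r : ℝ) (hν : ν = sSup {t ∈ Set.Ico 0 R | fp t < 0})
    (hρ : ρ = sSup {δ : ℝ | δ ∈ Set.Ioo 0 ν ∧ ∀ t ∈ Set.Ioo 0 δ, (f t / fp t - t) / t < 1})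
    (hr : r = min κ ρ)
    (x : ℕ → X) (hx0 : x 0 ∈ Metric.ball xs r) (hx0ne : x 0 ≠ xs)
    (hxrec : ∀ k, x (k + 1) = x k - pinv (Fp (x k)) (F (x k))) :
    (∀ k, x k ∈ Metric.ball xs r) ∧
      Filter.Tendsto x Filter.atTop (nhds xs) ∧
      Filter.Tendsto (fun k => ‖x (k + 1) - xs‖ / ‖x k - xs‖) Filter.atTop (nhds 0) :=
  stmt14_general Ω F Fp hF hclosed xs hxs hFxs hinj R β κ hβ hκ f fp hderiv hcont hmaj hf0 hfp0
    hmono ν ρ r hν hρ hr x hx0 hxrec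
end

section
/- For the Smale majorant function f(t) = t/(1 − γt) − 2t on [0, 1/γ) with γ > 0, f satisfies f(0)=0, f'(0)=−1, f' is strictly increasing and convex, ν = (1 − √2/2)/γ, ρ = (5 − √17)/(4γ), and the zeros of f in [0,1/γ) are exactly 0 and 1/(2γ), with f(t) < 0 for t ∈ (0, 1/(2γ)). -/
/-!
Writing `u = γ t`, everything reduces to the two factorizations
`f t = t (2u - 1) / (1 - u)` and `f t - 2 t f' t = t (2u² - 5u + 1) / (1 - u)²`.
The first gives the zeros and the sign of `f`. Since `f' t < 0` iff `(1 - u)² > 1/2`, i.e.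
`u < 1 - √2/2`, and on that range the Newton condition `(f/f' - t)/t < 1` is `f - 2 t f' > 0`,
the second shows that the condition holds exactly below the smaller root `(5 - √17)/4` of
`2u² - 5u + 1`. Convexity of `f'` is that of `x ↦ x⁻²` composed with the affine map `t ↦ 1 - γ t`.
-/

open Set

lemma setOf_forall_Ioo_eq_Ioc {P : ℝ → Prop} {a b c : ℝ} (hca : c < a) (hab : a < b)
    (hP : ∀ t ∈ Ioo c b, P t ↔ t < a) :
    {δ | δ ∈ Ioo c b ∧ ∀ t ∈ Ioo c δ, P t} = Ioc c a := by
  ext δ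
  constructor
  · rintro ⟨⟨hcδ, hδb⟩, hall⟩
    refine ⟨hcδ, le_of_not_gt fun haδ => ?_⟩
    obtain ⟨t, hat, htδ⟩ := exists_between haδ
    exact hat.not_gt ((hP t ⟨hca.trans hat, htδ.trans hδb⟩).1 (hall t ⟨hca.trans hat, htδ⟩))
  · rintro ⟨hcδ, hδa⟩
    exact ⟨⟨hcδ, hδa.trans_lt hab⟩,
      fun t ht => (hP t ⟨ht.1, ht.2.trans (hδa.trans_lt hab)⟩).2 (ht.2.trans_le hδa)⟩

lemma one_add_two_mul_sqrt_two_lt_sqrt_seventeen : 1 + 2 * √2 < √17 := by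
  have h2 : √2 ^ 2 = 2 := Real.sq_sqrt zero_le_two
  rw [Real.lt_sqrt (by positivity)]
  nlinarith [Real.sqrt_two_lt_three_halves]

noncomputable def smaleMajorant (γ t : ℝ) : ℝ := t / (1 - γ * t) - 2 * t

noncomputable def smaleMajorantDeriv (γ t : ℝ) : ℝ := 1 / (1 - γ * t) ^ 2 - 2

section SmaleMajorant

variable {γ t : ℝ}

lemma one_sub_mul_pos_of_mem_Ico (ht : t ∈ Ico 0 (1 / γ)) : 0 < 1 - γ * t := by
  have hγ : 0 < γ := one_div_pos.mp (ht.1.trans_lt ht.2)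
  have := (lt_div_iff₀ hγ).mp ht.2
  linarith

lemma smaleMajorant_eq_mul_div (h : 1 - γ * t ≠ 0) :
    smaleMajorant γ t = t * (2 * γ * t - 1) / (1 - γ * t) := by
  rw [smaleMajorant, eq_div_iff h, sub_mul, div_mul_cancel₀ _ h]; ring

lemma strictMonoOn_smaleMajorantDeriv : StrictMonoOn (smaleMajorantDeriv γ) (Ico 0 (1 / γ)) := by
  intro a ha b hb hab
  have hγ : 0 < γ := one_div_pos.mp (ha.1.trans_lt ha.2)
  have hb' := one_sub_mul_pos_of_mem_Ico hb
  have hsq : (1 - γ * b) ^ 2 < (1 - γ * a) ^ 2 :=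
    pow_lt_pow_left₀ (by nlinarith) hb'.le two_ne_zero
  simpa [smaleMajorantDeriv] using one_div_lt_one_div_of_lt (by positivity) hsq

lemma convexOn_smaleMajorantDeriv : ConvexOn ℝ (Ico 0 (1 / γ)) (smaleMajorantDeriv γ) := by
  have h := ((convexOn_zpow (𝕜 := ℝ) (-2)).comp_affineMap
    (AffineMap.lineMap (1 : ℝ) (1 - γ))).add_const (-2)
  refine (h.subset (fun t ht => ?_) (convex_Ico _ _)).congr fun t _ => ?_
  · simpa [AffineMap.lineMap_apply, sub_eq_add_neg, mul_comm] using one_sub_mul_pos_of_mem_Ico ht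
  · simp only [zpow_neg, zpow_ofNat, Pi.add_apply, Function.comp_apply, AffineMap.lineMap_apply,
      vsub_eq_sub, sub_sub_cancel_left, smul_eq_mul, mul_neg, vadd_eq_add, smaleMajorantDeriv,
      one_div]
    ring

lemma smaleMajorantDeriv_neg_iff (hγ : 0 < γ) (ht : t ∈ Ico 0 (1 / γ)) :
    smaleMajorantDeriv γ t < 0 ↔ t < (1 - √2 / 2) / γ := by
  have hs := one_sub_mul_pos_of_mem_Ico ht
  have half : (√2 / 2) ^ 2 = 1 / 2 := by rw [div_pow, Real.sq_sqrt zero_le_two]; norm_num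
  rw [smaleMajorantDeriv, sub_neg, div_lt_iff₀ (by positivity), lt_div_iff₀ hγ, mul_comm t γ]
  calc 1 < 2 * (1 - γ * t) ^ 2 ↔ (√2 / 2) ^ 2 < (1 - γ * t) ^ 2 := by
        rw [half]; constructor <;> intro <;> linarith
    _ ↔ √2 / 2 < 1 - γ * t := pow_lt_pow_iff_left₀ (by positivity) hs.le two_ne_zero
    _ ↔ γ * t < 1 - √2 / 2 := by constructor <;> intro <;> linarith

lemma setOf_smaleMajorantDeriv_neg (hγ : 0 < γ) :
    {t ∈ Ico 0 (1 / γ) | smaleMajorantDeriv γ t < 0} = Ico 0 ((1 - √2 / 2) / γ) := by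
  have hν : (1 - √2 / 2) / γ < 1 / γ :=
    div_lt_div_of_pos_right (sub_lt_self 1 (by positivity)) hγ
  ext t
  constructor
  · rintro ⟨ht, hneg⟩
    exact ⟨ht.1, (smaleMajorantDeriv_neg_iff hγ ht).1 hneg⟩
  · rintro ⟨h0, hlt⟩
    exact ⟨⟨h0, hlt.trans hν⟩, (smaleMajorantDeriv_neg_iff hγ ⟨h0, hlt.trans hν⟩).2 hlt⟩

lemma smaleMajorant_sub_two_mul_deriv (h : 1 - γ * t ≠ 0) :
    smaleMajorant γ t - 2 * t * smaleMajorantDeriv γ t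
      = t * (2 * (γ * t) ^ 2 - 5 * (γ * t) + 1) / (1 - γ * t) ^ 2 := by
  rw [smaleMajorant, smaleMajorantDeriv, eq_div_iff (pow_ne_zero 2 h)]
  linear_combination
    (1 - γ * t) * div_mul_cancel₀ t h - 2 * t * one_div_mul_cancel (pow_ne_zero 2 h)

lemma smaleMajorant_div_deriv_sub_div_lt_one_iff (hγ : 0 < γ) (ht0 : 0 < t)
    (htν : t < (1 - √2 / 2) / γ) :
    (smaleMajorant γ t / smaleMajorantDeriv γ t - t) / t < 1 ↔ t < (5 - √17) / (4 * γ) := by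
  have ht : t ∈ Ico 0 (1 / γ) :=
    ⟨ht0.le, htν.trans (div_lt_div_of_pos_right (sub_lt_self 1 (by positivity)) hγ)⟩
  have hs := one_sub_mul_pos_of_mem_Ico ht
  have hneg := (smaleMajorantDeriv_neg_iff hγ ht).2 htν
  have h17 : √17 ^ 2 = 17 := Real.sq_sqrt (by norm_num)
  have hfac : 2 * (γ * t) ^ 2 - 5 * (γ * t) + 1
      = 2 * ((5 - √17) / 4 - γ * t) * ((5 + √17) / 4 - γ * t) := by
    linear_combination (1 / 8) * h17
  have hroot : 0 < (5 + √17) / 4 - γ * t := by linarith [Real.sqrt_nonneg 17]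
  rw [div_lt_one ht0, sub_lt_iff_lt_add, div_lt_iff_of_neg hneg, ← sub_pos, ← two_mul,
    smaleMajorant_sub_two_mul_deriv hs.ne', div_pos_iff_of_pos_right (by positivity),
    mul_pos_iff_of_pos_left ht0, hfac, mul_pos_iff_of_pos_right hroot,
    mul_pos_iff_of_pos_left two_pos, sub_pos, lt_div_iff₀ four_pos, lt_div_iff₀ (by positivity)]
  constructor <;> intro <;> linarith

lemma sSup_smaleMajorant_div_deriv_sub_div_lt_one (hγ : 0 < γ) :
    sSup {δ | δ ∈ Ioo 0 ((1 - √2 / 2) / γ) ∧ ∀ t ∈ Ioo 0 δ,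
      (smaleMajorant γ t / smaleMajorantDeriv γ t - t) / t < 1} = (5 - √17) / (4 * γ) := by
  have hρ : 0 < (5 - √17) / (4 * γ) := by
    refine div_pos ?_ (by positivity)
    rw [sub_pos, Real.sqrt_lt' (by norm_num)]; norm_num
  have hρν : (5 - √17) / (4 * γ) < (1 - √2 / 2) / γ := by
    rw [div_lt_div_iff₀ (by positivity) hγ]
    nlinarith [one_add_two_mul_sqrt_two_lt_sqrt_seventeen]
  rw [setOf_forall_Ioo_eq_Ioc hρ hρν fun t ht =>
    smaleMajorant_div_deriv_sub_div_lt_one_iff hγ ht.1 ht.2, csSup_Ioc hρ]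

lemma smaleMajorant_eq_zero_iff (ht : t ∈ Ico 0 (1 / γ)) :
    smaleMajorant γ t = 0 ↔ t = 0 ∨ t = 1 / (2 * γ) := by
  have hγ : 0 < γ := one_div_pos.mp (ht.1.trans_lt ht.2)
  have hs := one_sub_mul_pos_of_mem_Ico ht
  rw [smaleMajorant_eq_mul_div hs.ne', div_eq_zero_iff, or_iff_left hs.ne', mul_eq_zero,
    sub_eq_zero, eq_div_iff (by positivity), mul_comm t]

lemma smaleMajorant_neg (ht : t ∈ Ioo 0 (1 / (2 * γ))) : smaleMajorant γ t < 0 := by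
  have hγ : 0 < γ := by
    have := one_div_pos.mp (ht.1.trans ht.2); linarith
  have hs := one_sub_mul_pos_of_mem_Ico
    ⟨ht.1.le, ht.2.trans (one_div_lt_one_div_of_lt hγ (by linarith))⟩
  have hlt : 2 * γ * t < 1 := by
    have := (lt_div_iff₀ (by positivity)).mp ht.2; linarith
  rw [smaleMajorant_eq_mul_div hs.ne']
  exact div_neg_of_neg_of_pos (mul_neg_of_pos_of_neg ht.1 (by linarith)) hs

end SmaleMajorant

theorem stmt17 (γ : ℝ) (hγ : 0 < γ)
    (f f' : ℝ → ℝ)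
    (hf : f = fun t => t / (1 - γ * t) - 2 * t)
    (hf' : f' = fun t => 1 / (1 - γ * t) ^ 2 - 2)
    (ν ρ : ℝ) (hν : ν = sSup {t ∈ Set.Ico 0 (1 / γ) | f' t < 0})
    (hρ : ρ = sSup {δ : ℝ | δ ∈ Set.Ioo 0 ν ∧ ∀ t ∈ Set.Ioo 0 δ, (f t / f' t - t) / t < 1}) :
    f 0 = 0 ∧ f' 0 = -1 ∧
      StrictMonoOn f' (Set.Ico 0 (1 / γ)) ∧
      ConvexOn ℝ (Set.Ico 0 (1 / γ)) f' ∧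
      ν = (1 - Real.sqrt 2 / 2) / γ ∧
      ρ = (5 - Real.sqrt 17) / (4 * γ) ∧
      (∀ t ∈ Set.Ico 0 (1 / γ), (f t = 0 ↔ t = 0 ∨ t = 1 / (2 * γ))) ∧
      ∀ t ∈ Set.Ioo 0 (1 / (2 * γ)), f t < 0 := by
  obtain rfl : f = smaleMajorant γ := hf
  obtain rfl : f' = smaleMajorantDeriv γ := hf'
  have hν₀ : ν = (1 - √2 / 2) / γ := by
    rw [hν, setOf_smaleMajorantDeriv_neg hγ,
      csSup_Ico (div_pos (by linarith [Real.sqrt_two_lt_three_halves]) hγ)]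
  refine ⟨by simp [smaleMajorant], by norm_num [smaleMajorantDeriv],
    strictMonoOn_smaleMajorantDeriv, convexOn_smaleMajorantDeriv, hν₀, ?_,
    fun t ht => smaleMajorant_eq_zero_iff ht, fun t ht => smaleMajorant_neg ht⟩
  rw [hρ, hν₀, sSup_smaleMajorant_div_deriv_sub_div_lt_one hγ]
end

section
/- Let L : [0,R) → ℝ be positive and integrable, and suppose for fixed 0 ≤ p ≤ 1 that t ↦ t^{1−p} L(t) is nondecreasing on (0,ν). Then the function t ↦ (1/t^{p+1}) ∫₀ᵗ L(u) u du is nondecreasing on (0,ν), and consequently t ↦ (f̄(t)/f̄'(t) − t)/t^{p+1} is strictly increasing on (0,ν), where f̄(t) = ∫₀ᵗ L(u)(t−u)du − t and ν := sup{t : ∫₀ᵗ L(u)du < 1}. -/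
open MeasureTheory Set intervalIntegral

theorem stmt19 (R : ℝ) (hR : 0 < R)
    (L : ℝ → ℝ) (hLpos : ∀ u ∈ Set.Ico (0:ℝ) R, 0 < L u)
    (hLint : MeasureTheory.IntegrableOn L (Set.Ico 0 R))
    (p : ℝ) (hp0 : 0 ≤ p) (hp1 : p ≤ 1)
    (fb fb' : ℝ → ℝ)
    (hfb : fb = fun t => (∫ u in (0:ℝ)..t, L u * (t - u)) - t)
    (hfb' : fb' = fun t => (∫ u in (0:ℝ)..t, L u) - 1)
    (ν : ℝ) (hν : ν = sSup {t ∈ Set.Ico 0 R | (∫ u in (0:ℝ)..t, L u) - 1 < 0})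
    (hL : MonotoneOn (fun t => t ^ (1 - p) * L t) (Set.Ioo 0 ν)) :
    MonotoneOn (fun t => (∫ u in (0:ℝ)..t, L u * u) / t ^ (p + 1)) (Set.Ioo 0 ν) ∧
      StrictMonoOn (fun t => (fb t / fb' t - t) / t ^ (p + 1)) (Set.Ioo 0 ν) := by
  subst hfb hfb'
  have hq : (0:ℝ) < p + 1 := by linarith
  -- ν ≤ R
  have hνR : ν ≤ R := by
    rw [hν]
    exact Real.sSup_le (fun x hx => hx.1.2.le) hR.le
  -- integrability of L on subintervals
  have hInt : ∀ a b : ℝ, 0 ≤ a → a ≤ b → b < R → IntervalIntegrable L volume a b := by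
    intro a b ha hab hb
    apply MeasureTheory.IntegrableOn.intervalIntegrable
    rw [Set.uIcc_of_le hab]
    exact hLint.mono_set (fun x hx => ⟨ha.trans hx.1, lt_of_le_of_lt hx.2 hb⟩)
  -- integrability of L u * u
  have hIntLu : ∀ a b : ℝ, 0 ≤ a → a ≤ b → b < R → IntervalIntegrable (fun u => L u * u) volume a b := by
    intro a b ha hab hb
    apply MeasureTheory.IntegrableOn.intervalIntegrable
    rw [Set.uIcc_of_le hab]
    have h1 : IntegrableOn L (Set.Icc a b) :=
      hLint.mono_set (fun x hx => ⟨ha.trans hx.1, lt_of_le_of_lt hx.2 hb⟩)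
    exact h1.mul_continuousOn continuousOn_id isCompact_Icc
  -- F t < 1 on (0, ν)
  have hFlt : ∀ t ∈ Set.Ioo (0:ℝ) ν, (∫ u in (0:ℝ)..t, L u) < 1 := by
    intro t ht
    have hSne : {t ∈ Set.Ico (0:ℝ) R | (∫ u in (0:ℝ)..t, L u) - 1 < 0}.Nonempty := by
      by_contra h
      rw [Set.not_nonempty_iff_eq_empty] at h
      rw [hν, h, Real.sSup_empty] at ht
      exact absurd ht.2 (not_lt.2 ht.1.le)
    obtain ⟨x, hxS, htx⟩ := exists_lt_of_lt_csSup hSne (hν ▸ ht.2)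
    have htR : t < R := lt_of_lt_of_le ht.2 hνR
    have hadd := integral_add_adjacent_intervals (hInt 0 t le_rfl ht.1.le htR)
      (hInt t x ht.1.le htx.le hxS.1.2)
    have h0 : 0 ≤ ∫ u in t..x, L u := by
      apply intervalIntegral.integral_nonneg htx.le
      intro u hu
      exact (hLpos u ⟨ht.1.le.trans hu.1, lt_of_le_of_lt hu.2 hxS.1.2⟩).le
    have := hxS.2
    linarith
  -- strict monotonicity of F
  have hFmono : ∀ s t : ℝ, 0 < s → s < t → t < R →
      (∫ u in (0:ℝ)..s, L u) < ∫ u in (0:ℝ)..t, L u := by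
    intro s t hs hst htR
    have hadd := integral_add_adjacent_intervals (hInt 0 s le_rfl hs.le (hst.trans htR))
      (hInt s t hs.le hst.le htR)
    have hpos : 0 < ∫ u in s..t, L u := by
      apply intervalIntegral_pos_of_pos_on (hInt s t hs.le hst.le htR) _ hst
      intro u hu
      exact hLpos u ⟨(hs.trans hu.1).le, hu.2.trans htR⟩
    linarith
  -- positivity of ∫ L u * u
  have hApos : ∀ t ∈ Set.Ioo (0:ℝ) ν, 0 < ∫ u in (0:ℝ)..t, L u * u := by
    intro t ht
    have htR : t < R := lt_of_lt_of_le ht.2 hνR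
    apply intervalIntegral_pos_of_pos_on (hIntLu 0 t le_rfl ht.1.le htR) _ ht.1
    intro u hu
    exact mul_pos (hLpos u ⟨hu.1.le, hu.2.trans htR⟩) hu.1
  -- Part 1: monotonicity
  have hmono : MonotoneOn (fun t => (∫ u in (0:ℝ)..t, L u * u) / t ^ (p + 1)) (Set.Ioo 0 ν) := by
    intro s hs t ht hst'
    rcases eq_or_lt_of_le hst' with rfl | hst
    · exact le_rfl
    have hsR : s < R := lt_of_lt_of_le hs.2 hνR
    have htR : t < R := lt_of_lt_of_le ht.2 hνR
    set c := s ^ (1 - p) * L s with hc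
    have hcpos : 0 < c := mul_pos (Real.rpow_pos_of_pos hs.1 _) (hLpos s ⟨hs.1.le, hsR⟩)
    have hrint : ∀ a b : ℝ, IntervalIntegrable (fun u => c * u ^ p) volume a b :=
      fun a b => (intervalIntegral.intervalIntegrable_rpow (Or.inl hp0)).const_mul c
    have h1 : (∫ u in (0:ℝ)..s, L u * u) ≤ c * (s ^ (p+1) / (p+1)) := by
      have key := intervalIntegral.integral_mono_on hs.1.le (hIntLu 0 s le_rfl hs.1.le hsR)
        (hrint 0 s) ?_
      · rw [intervalIntegral.integral_const_mul,
          integral_rpow (Or.inl (by linarith : (-1:ℝ) < p)),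
          Real.zero_rpow (by positivity : p + 1 ≠ 0)] at key
        simpa using key
      · intro u hu
        rcases eq_or_lt_of_le hu.1 with rfl | hu0
        · simp only [mul_zero]
          exact mul_nonneg hcpos.le (Real.rpow_nonneg le_rfl p)
        · have hkey : u ^ (1-p) * L u ≤ c :=
            hL ⟨hu0, lt_of_le_of_lt hu.2 hs.2⟩ hs hu.2
          calc L u * u = (u ^ (1-p) * L u) * u ^ p := by
                rw [mul_comm (u ^ (1-p)) (L u), mul_assoc, ← Real.rpow_add hu0]
                norm_num
            _ ≤ c * u ^ p := mul_le_mul_of_nonneg_right hkey (Real.rpow_nonneg hu.1 p)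
    have h2 : c * ((t ^ (p+1) - s ^ (p+1)) / (p+1)) ≤ ∫ u in s..t, L u * u := by
      have key := intervalIntegral.integral_mono_on hst.le (hrint s t)
        (hIntLu s t hs.1.le hst.le htR) ?_
      · rw [intervalIntegral.integral_const_mul,
          integral_rpow (Or.inl (by linarith : (-1:ℝ) < p))] at key
        exact key
      · intro u hu
        have hu0 : 0 < u := lt_of_lt_of_le hs.1 hu.1
        have hkey : c ≤ u ^ (1-p) * L u :=
          hL hs ⟨hu0, lt_of_le_of_lt hu.2 ht.2⟩ hu.1
        calc c * u ^ p ≤ (u ^ (1-p) * L u) * u ^ p :=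
              mul_le_mul_of_nonneg_right hkey (Real.rpow_nonneg hu0.le p)
          _ = L u * u := by
              rw [mul_comm (u ^ (1-p)) (L u), mul_assoc, ← Real.rpow_add hu0]
              norm_num
    have hadd := integral_add_adjacent_intervals (hIntLu 0 s le_rfl hs.1.le hsR)
      (hIntLu s t hs.1.le hst.le htR)
    have hsq : 0 < s ^ (p+1) := Real.rpow_pos_of_pos hs.1 _
    have htq : 0 < t ^ (p+1) := Real.rpow_pos_of_pos (hs.1.trans hst) _
    have hsq_le : s ^ (p+1) ≤ t ^ (p+1) := Real.rpow_le_rpow hs.1.le hst.le hq.le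
    simp only
    rw [div_le_div_iff₀ hsq htq, ← hadd]
    have h1' := mul_le_mul_of_nonneg_right h1 (sub_nonneg.2 hsq_le)
    have h2' := mul_le_mul_of_nonneg_left h2 hsq.le
    have e : c * (s ^ (p+1) / (p+1)) * (t ^ (p+1) - s ^ (p+1))
        = s ^ (p+1) * (c * ((t ^ (p+1) - s ^ (p+1)) / (p+1))) := by ring
    linarith [h1', h2', e]
  refine ⟨hmono, ?_⟩
  -- rewrite the second function
  have hval : ∀ t ∈ Set.Ioo (0:ℝ) ν,
      ((∫ u in (0:ℝ)..t, L u * (t - u)) - t) / ((∫ u in (0:ℝ)..t, L u) - 1) - t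
        = (∫ u in (0:ℝ)..t, L u * u) / (1 - ∫ u in (0:ℝ)..t, L u) := by
    intro t ht
    have htR : t < R := lt_of_lt_of_le ht.2 hνR
    have hF := hFlt t ht
    have hsplit : (∫ u in (0:ℝ)..t, L u * (t - u))
        = (∫ u in (0:ℝ)..t, L u) * t - ∫ u in (0:ℝ)..t, L u * u := by
      simp only [mul_sub]
      rw [intervalIntegral.integral_sub ((hInt 0 t le_rfl ht.1.le htR).mul_const t)
        (hIntLu 0 t le_rfl ht.1.le htR), intervalIntegral.integral_mul_const]
    rw [hsplit]
    have hne : (∫ u in (0:ℝ)..t, L u) - 1 ≠ 0 := by linarith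
    have hne' : 1 - (∫ u in (0:ℝ)..t, L u) ≠ 0 := by linarith
    field_simp
    ring
  intro s hs t ht hst
  have hsR : s < R := lt_of_lt_of_le hs.2 hνR
  have htR : t < R := lt_of_lt_of_le ht.2 hνR
  simp only
  rw [hval s hs, hval t ht, div_right_comm, div_right_comm _ (1 - _)]
  have hDt : 0 < 1 - ∫ u in (0:ℝ)..t, L u := by linarith [hFlt t ht]
  have hDst : (1 - ∫ u in (0:ℝ)..t, L u) < 1 - ∫ u in (0:ℝ)..s, L u := by
    have := hFmono s t hs.1 hst htR
    linarith
  have hgs_le : (∫ u in (0:ℝ)..s, L u * u) / s ^ (p+1)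
      ≤ (∫ u in (0:ℝ)..t, L u * u) / t ^ (p+1) := hmono hs ht hst.le
  have hgt : 0 < (∫ u in (0:ℝ)..t, L u * u) / t ^ (p+1) :=
    div_pos (hApos t ht) (Real.rpow_pos_of_pos (hs.1.trans hst) _)
  calc (∫ u in (0:ℝ)..s, L u * u) / s ^ (p+1) / (1 - ∫ u in (0:ℝ)..s, L u)
      ≤ (∫ u in (0:ℝ)..t, L u * u) / t ^ (p+1) / (1 - ∫ u in (0:ℝ)..s, L u) := by
        have hDs : (0:ℝ) < 1 - ∫ u in (0:ℝ)..s, L u := by linarith [hFlt s hs]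
        gcongr
    _ < (∫ u in (0:ℝ)..t, L u * u) / t ^ (p+1) / (1 - ∫ u in (0:ℝ)..t, L u) :=
        div_lt_div_of_pos_left hgt hDt hDst
end
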